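/- arXiv:2110.05859 — 5 statements merged into one kernel-verified Lean document; each statement's English description precedes it below -/
import Mathlib

section
/- For every sequence of positive numbers {a_n} with a_n → 0 and a_n·log n → ∞, and for every x > 0, it holds that limsup_{n→∞} a_n · log P(a_n·log n·(T_n/(n·log n) − 1) ≥ x) ≤ −x. -/
open Filter MeasureTheory ProbabilityTheory Topology
open scoped ENNReal

set_option maxHeartbeats 1000000

private lemma aux_sum_inv_le_log : ∀ n : ℕ, 1 ≤ n →
    ∑ j ∈ Finset.range n, (1 : ℝ) / (j + 1) ≤ 1 + Real.log n := by
  intro n hn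
  induction n, hn using Nat.le_induction with
  | base => simp
  | succ n hn ih =>
    rw [Finset.sum_range_succ]
    have hn0 : (0 : ℝ) < n := by exact_mod_cast hn
    have h1 : (0:ℝ) < (n:ℝ)/(n+1) := by positivity
    have h2 := Real.log_le_sub_one_of_pos h1
    rw [Real.log_div hn0.ne' (by positivity)] at h2
    have h3 : (n:ℝ)/(n+1) - 1 = -(1/((n:ℝ)+1)) := by field_simp; ring
    push_cast
    push_cast at ih
    linarith
  
private lemma aux_sum_inv_sq_le : ∀ n : ℕ, 1 ≤ n →
    ∑ j ∈ Finset.range n, ((1 : ℝ) / (j + 1)) ^ 2 ≤ 2 - 1/(n:ℝ) := by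
  intro n hn
  induction n, hn using Nat.le_induction with
  | base => norm_num
  | succ n hn ih =>
    rw [Finset.sum_range_succ]
    have hn0 : (0 : ℝ) < n := by exact_mod_cast hn
    have h1 : ((1:ℝ)/((n:ℝ)+1))^2 ≤ 1/((n:ℝ)*((n:ℝ)+1)) := by
      rw [div_pow, one_pow]
      apply one_div_le_one_div_of_le (by positivity)
      nlinarith
    have h2 : 1/((n:ℝ)*((n:ℝ)+1)) = 1/(n:ℝ) - 1/((n:ℝ)+1) := by
      field_simp; ring
    push_cast
    push_cast at ih
    linarith

private lemma aux_neg_log_le {u c : ℝ} (h0 : 0 ≤ u) (huc : u ≤ c) (hc : c < 1) :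
    -Real.log (1 - u) ≤ u + u^2/(1-c) := by
  have h1u : 0 < 1 - u := by linarith
  have h := Real.log_le_sub_one_of_pos (show (0:ℝ) < (1-u)⁻¹ by positivity)
  rw [Real.log_inv] at h
  have h2 : (1-u)⁻¹ - 1 = u/(1-u) := by field_simp; ring
  have h3 : u/(1-u) ≤ u + u^2/(1-c) := by
    have e : u/(1-u) = u + u^2/(1-u) := by field_simp; ring
    have e2 : u^2/(1-u) ≤ u^2/(1-c) := by gcongr
    linarith
  linarith

private lemma aux_log_one_add_ge {y : ℝ} (h0 : 0 ≤ y) (h1 : y ≤ 1) :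
    y - y^2 ≤ Real.log (1 + y) := by
  have hy : (0:ℝ) < 1 + y := by linarith
  have h := Real.log_le_sub_one_of_pos (show (0:ℝ) < (1+y)⁻¹ by positivity)
  rw [Real.log_inv] at h
  have h2 : (1+y)⁻¹ - 1 = -(y/(1+y)) := by field_simp; ring
  have h3 : y - y^2 ≤ y/(1+y) := by
    rw [le_div_iff₀ hy]; nlinarith
  linarith

private lemma coord_mgf {Ω : Type*} [MeasureSpace Ω] [IsProbabilityMeasure (ℙ : Measure Ω)]
    (X : Ω → ℕ) (hX : Measurable X) (q : ℝ) (hq0 : 0 ≤ q) (hq1 : q < 1)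
    (hgeom : ∀ h : ℕ, 1 ≤ h → (ℙ {ω | X ω = h}).toReal = q ^ (h - 1) * (1 - q))
    (s : ℝ) (hs1 : 1 ≤ s) (hqs : q * s < 1) :
    Integrable (fun ω => s ^ (X ω)) (ℙ : Measure Ω) ∧
      ∫ ω, s ^ (X ω) ∂(ℙ : Measure Ω) = (1 - q) * s / (1 - q * s) := by
  have hs0 : (0:ℝ) < s := lt_of_lt_of_le one_pos hs1
  have hp : (0:ℝ) < 1 - q := by linarith
  have hps : (0:ℝ) < 1 - q * s := by linarith
  -- measure of fibers
  have hfib : ∀ h : ℕ, 1 ≤ h → ℙ (X ⁻¹' {h}) = ENNReal.ofReal (q ^ (h-1) * (1 - q)) := by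
    intro h hh
    have hset : X ⁻¹' {h} = {ω | X ω = h} := by ext ω; simp
    rw [hset, ← ENNReal.ofReal_toReal (measure_ne_top ℙ _), hgeom h hh]
  -- total mass
  have htot : ∑' h : ℕ, ℙ (X ⁻¹' {h}) = 1 := by
    rw [← measure_iUnion ?_ (fun h => hX (measurableSet_singleton h))]
    · rw [show (⋃ h : ℕ, X ⁻¹' {h}) = Set.univ by ext ω; simp]
      exact measure_univ
    · intro i j hij
      exact Set.disjoint_left.2 (by intro ω h1 h2; exact hij (by simp_all))
  -- geometric series sums to 1
  have hsummable : Summable (fun h : ℕ => q ^ h * (1 - q)) :=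
    (summable_geometric_of_lt_one hq0 hq1).mul_right _
  have hgeo1 : (∑' h : ℕ, ENNReal.ofReal (q ^ h * (1 - q))) = 1 := by
    rw [← ENNReal.ofReal_tsum_of_nonneg (fun h => by positivity) hsummable,
      tsum_mul_right, tsum_geometric_of_lt_one hq0 hq1]
    rw [inv_mul_cancel₀ (by linarith)]
    simp
  -- zero fiber has measure zero
  have hzero : ℙ (X ⁻¹' {0}) = 0 := by
    have hsplit := tsum_eq_zero_add' (f := fun h : ℕ => ℙ (X ⁻¹' {h})) ENNReal.summable
    rw [hsplit] at htot
    have : (∑' h : ℕ, ℙ (X ⁻¹' {h + 1})) = 1 := by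
      rw [← hgeo1]
      congr 1
      ext h
      rw [hfib (h+1) (by omega)]
      simp
    rw [this] at htot
    have := WithTop.add_right_cancel (by simp : (1:ℝ≥0∞) ≠ ⊤)
      (htot.trans (zero_add 1).symm)
    exact this
  -- lintegral computation
  have hlint : ∫⁻ ω, ENNReal.ofReal (s ^ (X ω)) ∂ℙ
      = ENNReal.ofReal ((1 - q) * s / (1 - q * s)) := by
    have h1 : ∫⁻ ω, ENNReal.ofReal (s ^ (X ω)) ∂ℙ
        = ∫⁻ h, ENNReal.ofReal (s ^ h) ∂(Measure.map X ℙ) :=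
      (lintegral_map (f := fun h : ℕ => ENNReal.ofReal (s ^ h)) measurable_from_top hX).symm
    rw [h1, lintegral_countable' (fun h => ENNReal.ofReal (s ^ h))]
    have h2 : ∀ h : ℕ, Measure.map X ℙ {h} = ℙ (X ⁻¹' {h}) := fun h =>
      Measure.map_apply hX (measurableSet_singleton h)
    simp_rw [h2]
    rw [tsum_eq_zero_add' ENNReal.summable]
    rw [hzero, mul_zero, zero_add]
    have h3 : ∀ h : ℕ, ENNReal.ofReal (s ^ (h+1)) * ℙ (X ⁻¹' {h + 1})
        = ENNReal.ofReal ((s * (1 - q)) * (s * q) ^ h) := by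
      intro h
      rw [hfib (h+1) (by omega)]
      rw [← ENNReal.ofReal_mul (by positivity)]
      congr 1
      simp only [Nat.add_sub_cancel]
      rw [mul_pow]
      ring
    simp_rw [h3]
    have hsum2 : Summable (fun h : ℕ => (s * (1 - q)) * (s * q) ^ h) := by
      apply Summable.mul_left
      apply summable_geometric_of_lt_one (by positivity)
      rw [mul_comm]; exact hqs
    rw [← ENNReal.ofReal_tsum_of_nonneg (fun h => by positivity) hsum2]
    congr 1
    rw [tsum_mul_left, tsum_geometric_of_lt_one (by positivity) (by rw [mul_comm]; exact hqs)]
    rw [div_eq_mul_inv]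
    rw [mul_comm s q]
    ring
  -- integrability
  have hmeas : AEStronglyMeasurable (fun ω => s ^ (X ω)) (ℙ : Measure Ω) :=
    ((measurable_from_top (f := fun h : ℕ => s ^ h)).comp hX).aestronglyMeasurable
  have hnonneg : 0 ≤ᶠ[ae (ℙ : Measure Ω)] (fun ω => s ^ (X ω)) :=
    Filter.Eventually.of_forall (fun ω => by positivity)
  have hint : Integrable (fun ω => s ^ (X ω)) (ℙ : Measure Ω) := by
    refine ⟨hmeas, ?_⟩
    rw [hasFiniteIntegral_iff_ofReal hnonneg, hlint]
    exact ENNReal.ofReal_lt_top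
  refine ⟨hint, ?_⟩
  rw [integral_eq_lintegral_of_nonneg_ae hnonneg hmeas, hlint,
    ENNReal.toReal_ofReal (by positivity)]

private lemma aux_S1 (n : ℕ) (hn : 1 ≤ n) (c : ℝ) (hc : 0 ≤ c) :
    ∑ j ∈ Finset.range n, c * (j:ℝ) / (n * ((n:ℝ) - j)) ≤ c * Real.log n := by
  have hn0 : (0:ℝ) < n := by exact_mod_cast hn
  rw [← Finset.sum_range_reflect]
  have hterm : ∀ j ∈ Finset.range n,
      c * ((n - 1 - j : ℕ):ℝ) / (n * ((n:ℝ) - ((n - 1 - j : ℕ):ℝ))) ≤ c * (1/(j+1)) - c/n := by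
    intro j hj
    rw [Finset.mem_range] at hj
    have he : (n - 1 - j : ℕ) = n - (j+1) := by omega
    rw [he, Nat.cast_sub (by omega)]
    push_cast
    have hj1 : (0:ℝ) < (j:ℝ) + 1 := by positivity
    apply le_of_eq
    field_simp
    ring
  refine le_trans (Finset.sum_le_sum hterm) ?_
  rw [Finset.sum_sub_distrib, Finset.sum_const, Finset.card_range, ← Finset.mul_sum]
  have h1 := aux_sum_inv_le_log n hn
  have h2 : c * ∑ j ∈ Finset.range n, (1:ℝ)/(j+1) ≤ c * (1 + Real.log n) :=
    mul_le_mul_of_nonneg_left h1 hc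
  have h3 : (n:ℝ) * (c/n) = c := by field_simp
  simp only [nsmul_eq_mul]
  linarith

private lemma aux_S2 (n : ℕ) (hn : 1 ≤ n) (c : ℝ) (hc : 0 ≤ c) :
    ∑ j ∈ Finset.range n, (c * (j:ℝ) / (n * ((n:ℝ) - j)))^2 ≤ 2 * c^2 := by
  have hn0 : (0:ℝ) < n := by exact_mod_cast hn
  rw [← Finset.sum_range_reflect]
  have hterm : ∀ j ∈ Finset.range n,
      (c * ((n - 1 - j : ℕ):ℝ) / (n * ((n:ℝ) - ((n - 1 - j : ℕ):ℝ))))^2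
        ≤ c^2 * ((1:ℝ)/(j+1))^2 := by
    intro j hj
    rw [Finset.mem_range] at hj
    have he : (n - 1 - j : ℕ) = n - (j+1) := by omega
    rw [he, Nat.cast_sub (by omega)]
    push_cast
    have hj1 : (0:ℝ) < (j:ℝ) + 1 := by positivity
    have hjn : (j:ℝ) + 1 ≤ n := by exact_mod_cast hj
    have hb : 0 ≤ c * ((n:ℝ) - ((j:ℝ)+1)) / (n * ((n:ℝ) - ((n:ℝ) - ((j:ℝ)+1)))) := by
      apply div_nonneg
      · apply mul_nonneg hc; linarith
      · apply mul_nonneg hn0.le; linarith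
    have hub : c * ((n:ℝ) - ((j:ℝ)+1)) / (n * ((n:ℝ) - ((n:ℝ) - ((j:ℝ)+1)))) ≤ c * (1/((j:ℝ)+1)) := by
      have hd : (n:ℝ) - ((n:ℝ) - ((j:ℝ)+1)) = (j:ℝ)+1 := by ring
      rw [hd, div_le_iff₀ (by positivity)]
      have h5 : c * ((n:ℝ) - ((j:ℝ)+1)) ≤ c * n := by
        apply mul_le_mul_of_nonneg_left _ hc; linarith
      have h6 : c * (1/((j:ℝ)+1)) * ((n:ℝ) * ((j:ℝ)+1)) = c * n := by field_simp
      linarith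
    calc (c * ((n:ℝ) - ((j:ℝ)+1)) / (n * ((n:ℝ) - ((n:ℝ) - ((j:ℝ)+1)))))^2
        ≤ (c * (1/((j:ℝ)+1)))^2 := by apply pow_le_pow_left₀ hb hub
      _ = c^2 * ((1:ℝ)/((j:ℝ)+1))^2 := by ring
  refine le_trans (Finset.sum_le_sum hterm) ?_
  rw [← Finset.mul_sum]
  have h1 := aux_sum_inv_sq_le n hn
  have h2 : c^2 * ∑ j ∈ Finset.range n, ((1:ℝ)/(j+1))^2 ≤ c^2 * (2 - 1/n) :=
    mul_le_mul_of_nonneg_left h1 (by positivity)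
  have h3 : c^2 * (2 - 1/(n:ℝ)) ≤ 2 * c^2 := by
    have : 0 ≤ c^2 * (1/(n:ℝ)) := by positivity
    nlinarith
  linarith

private lemma chernoff_bound {Ω : Type*} [MeasureSpace Ω] [IsProbabilityMeasure (ℙ : Measure Ω)]
    (n : ℕ) (hn : 3 ≤ n) (X : ℕ → Ω → ℕ) (hX : ∀ k, Measurable (X k))
    (hind : iIndepFun (fun k : Set.Icc 1 n => X (k : ℕ)) ℙ)
    (hgeom : ∀ k : ℕ, 1 ≤ k → k ≤ n → ∀ h : ℕ, 1 ≤ h →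
      (ℙ {ω | X k ω = h}).toReal = ((k - 1 : ℝ) / n) ^ (h - 1) * (1 - (k - 1 : ℝ) / n))
    (c m : ℝ) (hc0 : 0 < c) (hc1 : c < 1) (hm : 0 ≤ m) :
    (ℙ {ω | m ≤ ∑ k ∈ Finset.Icc 1 n, (X k ω : ℝ)}).toReal ≤
      Real.exp (c - c*m/n + c^2*m/n^2 + c*Real.log n + 2*c^2/(1-c)) := by
  have hn1 : 1 ≤ n := by omega
  have hn3 : (3:ℝ) ≤ (n:ℝ) := by exact_mod_cast hn
  have hn0 : (0:ℝ) < n := by linarith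
  set s : ℝ := 1 + c/n with hs_def
  have hcn0 : 0 < c/(n:ℝ) := by positivity
  have hs1 : 1 ≤ s := by simp only [hs_def]; linarith
  have hs0 : (0:ℝ) < s := by linarith
  set t : ℝ := Real.log s with ht_def
  have ht0 : 0 ≤ t := Real.log_nonneg hs1
  set q : ℕ → ℝ := fun k => ((k:ℝ) - 1)/n with hq_def
  set u : ℕ → ℝ := fun k => c * ((k:ℝ) - 1) / (n * ((n:ℝ) - k + 1)) with hu_def
  set F : ℕ → ℝ := fun k => (1 - q k) * s / (1 - q k * s) with hF_def
  have hkfacts : ∀ k : ℕ, 1 ≤ k → k ≤ n →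
      0 ≤ q k ∧ q k < 1 ∧ q k * s < 1 ∧ 0 ≤ u k ∧ u k ≤ c ∧ F k = s / (1 - u k) := by
    intro k hk1 hkn
    have hk1' : (1:ℝ) ≤ k := by exact_mod_cast hk1
    have hkn' : (k:ℝ) ≤ n := by exact_mod_cast hkn
    have hq0 : 0 ≤ q k := by
      simp only [hq_def]; exact div_nonneg (by linarith) hn0.le
    have hq1 : q k < 1 := by
      simp only [hq_def]; rw [div_lt_one hn0]; linarith
    have hqs : q k * s < 1 := by
      simp only [hq_def, hs_def]
      have he : ((k:ℝ)-1)/n * (1 + c/n) = (((k:ℝ)-1) * (n + c)) / (n*n) := by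
        field_simp; try ring
      rw [he, div_lt_one (by positivity)]
      nlinarith
    have hden : (0:ℝ) < (n:ℝ) - k + 1 := by linarith
    have hu0 : 0 ≤ u k := by
      simp only [hu_def]
      exact div_nonneg (mul_nonneg hc0.le (by linarith)) (mul_nonneg hn0.le hden.le)
    have huc : u k ≤ c := by
      simp only [hu_def]
      rw [div_le_iff₀ (by positivity)]
      nlinarith [mul_nonneg hn0.le (by linarith : (0:ℝ) ≤ (n:ℝ) - k)]
    have h1u : 0 < 1 - u k := by linarith
    have h1qs : (0:ℝ) < 1 - q k * s := by linarith
    have h1q : (0:ℝ) < 1 - q k := by linarith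
    have hFu : F k = s / (1 - u k) := by
      have e1 : 1 - q k * s = (1 - q k) * (1 - u k) := by
        simp only [hq_def, hu_def, hs_def]
        field_simp
        ring
      rw [hF_def]
      show (1 - q k) * s / (1 - q k * s) = s / (1 - u k)
      rw [e1, mul_comm (1 - q k) s, mul_comm (1 - q k) (1 - u k),
        mul_div_mul_right _ _ h1q.ne']
    exact ⟨hq0, hq1, hqs, hu0, huc, hFu⟩
  have hFlog : ∀ k : ℕ, 1 ≤ k → k ≤ n →
      Real.log (F k) ≤ c/n + (u k + (u k)^2/(1-c)) := by
    intro k hk1 hkn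
    obtain ⟨hq0, hq1, hqs, hu0, huc, hFu⟩ := hkfacts k hk1 hkn
    have h1u : 0 < 1 - u k := by linarith
    rw [hFu, Real.log_div hs0.ne' h1u.ne']
    have hls : Real.log s ≤ c/n := by
      have := Real.log_le_sub_one_of_pos hs0
      simp only [hs_def] at this ⊢
      linarith
    have hnl := aux_neg_log_le hu0 huc hc1
    linarith
  -- the real-valued random variables indexed by the subtype
  set Y : (Set.Icc 1 n) → Ω → ℝ := fun i ω => (X (i:ℕ) ω : ℝ) with hY_def
  have hYmeas : ∀ i, Measurable (Y i) := fun i => measurable_from_top.comp (hX i)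
  have hindY : iIndepFun Y ℙ :=
    hind.comp (fun _ (x : ℕ) => (x : ℝ)) (fun _ => measurable_from_top)
  have hexp_eq : ∀ i : Set.Icc 1 n,
      (fun ω => Real.exp (t * Y i ω)) = fun ω => s ^ (X (i:ℕ) ω) := by
    intro i
    funext ω
    rw [mul_comm, Real.exp_nat_mul, Real.exp_log hs0]
  have hcoord : ∀ i : Set.Icc 1 n,
      Integrable (fun ω => Real.exp (t * Y i ω)) (ℙ : Measure Ω) ∧ mgf (Y i) ℙ t = F (i:ℕ) := by
    intro i
    obtain ⟨hi1, hin⟩ := Set.mem_Icc.mp i.2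
    obtain ⟨hq0, hq1, hqs, _, _, _⟩ := hkfacts (i:ℕ) hi1 hin
    have hg : ∀ h : ℕ, 1 ≤ h →
        (ℙ {ω | X (i:ℕ) ω = h}).toReal = (q (i:ℕ))^(h-1) * (1 - q (i:ℕ)) := by
      intro h hh
      simpa [hq_def] using hgeom (i:ℕ) hi1 hin h hh
    have hc2 := coord_mgf (X (i:ℕ)) (hX (i:ℕ)) (q (i:ℕ)) hq0 hq1 hg s hs1 hqs
    constructor
    · rw [hexp_eq i]; exact hc2.1
    · show ∫ ω, Real.exp (t * Y i ω) ∂ℙ = F (i:ℕ)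
      rw [hexp_eq i, hc2.2, hF_def]
  have hsum : ∀ ω : Ω, (∑ i : Set.Icc 1 n, Y i ω) = ∑ k ∈ Finset.Icc 1 n, (X k ω : ℝ) := by
    intro ω
    rw [Finset.sum_set_coe (f := fun k => (X k ω : ℝ)) (Set.Icc 1 n), Set.toFinset_Icc]
  have hset : {ω | m ≤ ∑ k ∈ Finset.Icc 1 n, (X k ω : ℝ)}
      = {ω | m ≤ (∑ i : Set.Icc 1 n, Y i) ω} := by
    ext ω
    simp only [Set.mem_setOf_eq, Finset.sum_apply]
    rw [hsum ω]
  have hint_sum : Integrable (fun ω => Real.exp (t * (∑ i : Set.Icc 1 n, Y i) ω)) (ℙ : Measure Ω) :=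
    hindY.integrable_exp_mul_sum hYmeas (fun i _ => (hcoord i).1)
  have hch := measure_ge_le_exp_mul_mgf (X := ∑ i : Set.Icc 1 n, Y i) (μ := ℙ) m ht0 hint_sum
  rw [hset]
  refine le_trans hch ?_
  rw [hindY.mgf_sum hYmeas Finset.univ]
  have hprod : (∏ i : Set.Icc 1 n, mgf (Y i) ℙ t) = ∏ k ∈ Finset.Icc 1 n, F k := by
    calc (∏ i : Set.Icc 1 n, mgf (Y i) ℙ t) = ∏ i : Set.Icc 1 n, F (i:ℕ) :=
          Finset.prod_congr rfl (fun i _ => (hcoord i).2)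
    _ = ∏ k ∈ (Set.Icc 1 n).toFinset, F k := Finset.prod_set_coe (f := F) (Set.Icc 1 n)
    _ = ∏ k ∈ Finset.Icc 1 n, F k := by rw [Set.toFinset_Icc]
  rw [hprod]
  have hFpos : ∀ k ∈ Finset.Icc 1 n, 0 < F k := by
    intro k hk
    rw [Finset.mem_Icc] at hk
    obtain ⟨_, _, _, hu0, huc, hFu⟩ := hkfacts k hk.1 hk.2
    have h1u : 0 < 1 - u k := by linarith
    rw [hFu]
    positivity
  have hprodexp : (∏ k ∈ Finset.Icc 1 n, F k)
      = Real.exp (∑ k ∈ Finset.Icc 1 n, Real.log (F k)) := by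
    rw [Real.exp_sum]
    exact Finset.prod_congr rfl (fun k hk => (Real.exp_log (hFpos k hk)).symm)
  rw [hprodexp, ← Real.exp_add, Real.exp_le_exp]
  -- numerical bound
  have hA : -t*m ≤ -(c*m/n) + c^2*m/n^2 := by
    have hy := aux_log_one_add_ge (y := c/n) hcn0.le (by rw [div_le_one hn0]; linarith)
    have hy' : c/n - (c/n)^2 ≤ t := by rw [ht_def, hs_def]; exact hy
    have h2 : (c/n - (c/n)^2) * m ≤ t * m := mul_le_mul_of_nonneg_right hy' hm
    have h3 : -((c/n - (c/n)^2) * m) = -(c*m/n) + c^2*m/n^2 := by ring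
    linarith
  have hsum_c : ∑ _k ∈ Finset.Icc 1 n, (c/n : ℝ) = c := by
    rw [Finset.sum_const, Nat.card_Icc, Nat.add_sub_cancel, nsmul_eq_mul]
    field_simp
  have hIccRange : ∀ g : ℕ → ℝ, ∑ k ∈ Finset.Icc 1 n, g k = ∑ j ∈ Finset.range n, g (1+j) := by
    intro g
    rw [← Finset.Ico_add_one_right_eq_Icc, Finset.sum_Ico_eq_sum_range]
    simp
  have hu_shift : ∀ j ∈ Finset.range n, u (1+j) = c * (j:ℝ) / (n * ((n:ℝ) - j)) := by
    intro j _
    simp only [hu_def]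
    push_cast
    ring_nf
  have hS1 : ∑ k ∈ Finset.Icc 1 n, u k ≤ c * Real.log n := by
    rw [hIccRange u, Finset.sum_congr rfl hu_shift]
    exact aux_S1 n hn1 c hc0.le
  have hS2 : ∑ k ∈ Finset.Icc 1 n, (u k)^2 ≤ 2*c^2 := by
    rw [hIccRange (fun k => (u k)^2)]
    have : ∀ j ∈ Finset.range n, (u (1+j))^2 = (c * (j:ℝ) / (n * ((n:ℝ) - j)))^2 := by
      intro j hj; rw [hu_shift j hj]
    rw [Finset.sum_congr rfl this]
    exact aux_S2 n hn1 c hc0.le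
  have hB : ∑ k ∈ Finset.Icc 1 n, Real.log (F k) ≤ c + (c*Real.log n + 2*c^2/(1-c)) := by
    have h1 : ∑ k ∈ Finset.Icc 1 n, Real.log (F k)
        ≤ ∑ k ∈ Finset.Icc 1 n, (c/n + (u k + (u k)^2/(1-c))) := by
      apply Finset.sum_le_sum
      intro k hk
      rw [Finset.mem_Icc] at hk
      exact hFlog k hk.1 hk.2
    have h2 : ∑ k ∈ Finset.Icc 1 n, (c/n + (u k + (u k)^2/(1-c)))
        = c + ((∑ k ∈ Finset.Icc 1 n, u k) + (∑ k ∈ Finset.Icc 1 n, (u k)^2)/(1-c)) := by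
      rw [Finset.sum_add_distrib, Finset.sum_add_distrib, hsum_c, ← Finset.sum_div]
    have h1c : (0:ℝ) < 1 - c := by linarith
    have h3 : (∑ k ∈ Finset.Icc 1 n, (u k)^2)/(1-c) ≤ 2*c^2/(1-c) := by
      gcongr
    linarith
  linarith

/-- For every `x > 0`, `limsup a_n * log P(a_n * log n * (T_n/(n log n) - 1) ≥ x) ≤ -x`. -/
theorem stmt_14
    {Ω : Type*} [MeasureSpace Ω] [IsProbabilityMeasure (ℙ : Measure Ω)]
    (X : ℕ → ℕ → Ω → ℕ) (hX : ∀ n k, Measurable (X n k))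
    (h_indep : ∀ n : ℕ, iIndepFun
      (fun k : Set.Icc 1 n => X n (k : ℕ)) ℙ)
    (h_geom : ∀ n : ℕ, 1 ≤ n → ∀ k : ℕ, 1 ≤ k → k ≤ n → ∀ h : ℕ, 1 ≤ h →
      (ℙ {ω | X n k ω = h}).toReal = ((k - 1 : ℝ) / n) ^ (h - 1) * (1 - (k - 1 : ℝ) / n))
    (a : ℕ → ℝ) (ha_pos : ∀ n, 0 < a n) (ha_zero : Tendsto a atTop (nhds 0))
    (ha_top : Tendsto (fun n : ℕ => a n * Real.log n) atTop atTop) :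
    ∀ x : ℝ, 0 < x →
      limsup (fun n : ℕ => ((a n : ℝ) : EReal) *
          ENNReal.log (ℙ {ω | x ≤ a n * Real.log n *
            ((∑ k ∈ Finset.Icc 1 n, (X n k ω : ℝ)) / (n * Real.log n) - 1)})) atTop
        ≤ ((-x : ℝ) : EReal) := by
  intro x hx
  refine le_of_forall_gt_imp_ge_of_dense fun z hz => ?_
  induction z using EReal.rec with
  | bot => exact absurd hz (by simp)
  | top => exact le_top
  | coe z =>
    have hz' : -x < z := EReal.coe_lt_coe_iff.mp hz
    set ε : ℝ := z + x with hε_def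
    have hε : 0 < ε := by simp only [hε_def]; linarith
    set c : ℝ := max (1/2) (1 - ε/(2*x)) with hc_def
    have hc0 : (0:ℝ) < c := lt_of_lt_of_le (by norm_num) (le_max_left _ _)
    have hc1 : c < 1 := by
      apply max_lt (by norm_num)
      have : 0 < ε/(2*x) := by positivity
      linarith
    have hcx : x - c*x ≤ ε/2 := by
      have h1 : 1 - ε/(2*x) ≤ c := le_max_right _ _
      have h2 : (1 - ε/(2*x)) * x ≤ c * x := mul_le_mul_of_nonneg_right h1 hx.le
      have h3 : (1 - ε/(2*x)) * x = x - ε/2 := by field_simp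
      linarith
    -- the error sequence tends to 0
    have hlim : Tendsto (fun n : ℕ =>
        (a n * c + 2*c^2 * a n / (1-c)) + c^2 * (a n * (Real.log n / n) + x / n))
        atTop (nhds ((0 * c + 2*c^2 * 0 / (1-c)) + c^2 * (0 * 0 + 0))) := by
      have h1 : Tendsto (fun n : ℕ => Real.log n / (n:ℝ)) atTop (nhds 0) := by
        have := (Real.isLittleO_log_id_atTop.tendsto_div_nhds_zero).comp
          (tendsto_natCast_atTop_atTop (R := ℝ))
        exact this
      have h2 : Tendsto (fun n : ℕ => x / (n:ℝ)) atTop (nhds 0) :=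
        tendsto_const_div_atTop_nhds_zero_nat x
      exact ((ha_zero.mul_const c).add ((ha_zero.const_mul (2*c^2)).div_const (1-c))).add
        (((ha_zero.mul h1).add h2).const_mul (c^2))
    have hlim0 : Tendsto (fun n : ℕ =>
        (a n * c + 2*c^2 * a n / (1-c)) + c^2 * (a n * (Real.log n / n) + x / n))
        atTop (nhds 0) := by
      convert hlim using 2
      norm_num
    have hev1 : ∀ᶠ n : ℕ in atTop,
        (a n * c + 2*c^2 * a n / (1-c)) + c^2 * (a n * (Real.log n / n) + x / n) < ε/2 :=
      hlim0.eventually_lt_const (by positivity)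
    have hev : ∀ᶠ n : ℕ in atTop, ((a n : ℝ) : EReal) *
        ENNReal.log (ℙ {ω | x ≤ a n * Real.log n *
          ((∑ k ∈ Finset.Icc 1 n, (X n k ω : ℝ)) / (n * Real.log n) - 1)}) ≤ (z : EReal) := by
      filter_upwards [hev1, eventually_ge_atTop 3] with n hErr hn3
      have hn0 : (0:ℝ) < n := by
        have : (3:ℝ) ≤ (n:ℝ) := by exact_mod_cast hn3
        linarith
      have hlogn : 0 < Real.log n := Real.log_pos (by exact_mod_cast (by omega : 1 < n))
      have han : 0 < a n := ha_pos n
      set m : ℝ := n * Real.log n + x * n / a n with hm_def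
      clear_value m
      have hm0 : 0 ≤ m := by
        have h1 : 0 ≤ (n:ℝ) * Real.log n := mul_nonneg hn0.le hlogn.le
        have h2 : 0 ≤ x * n / a n := by positivity
        linarith
      -- event rewrite
      have hEset : {ω | x ≤ a n * Real.log n *
            ((∑ k ∈ Finset.Icc 1 n, (X n k ω : ℝ)) / (n * Real.log n) - 1)}
          = {ω | m ≤ ∑ k ∈ Finset.Icc 1 n, (X n k ω : ℝ)} := by
        ext ω
        simp only [Set.mem_setOf_eq]
        set S := ∑ k ∈ Finset.Icc 1 n, (X n k ω : ℝ) with hS_def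
        clear_value S
        have key : a n * Real.log n * (S / (n * Real.log n) - 1)
            = (a n / n) * S - a n * Real.log n := by
          field_simp
        rw [key]
        constructor
        · intro h
          have h2 : x + a n * Real.log n ≤ (a n / n) * S := by linarith
          have h3 : (x + a n * Real.log n) * (n / a n) ≤ (a n / n) * S * (n / a n) :=
            mul_le_mul_of_nonneg_right h2 (by positivity)
          have h4 : (a n / n) * S * (n / a n) = S := by field_simp
          have h5 : (x + a n * Real.log n) * (n / a n) = m := by
            rw [hm_def]; field_simp; ring
          linarith
        · intro h
          have h2 : (a n / n) * m ≤ (a n / n) * S := mul_le_mul_of_nonneg_left h (by positivity)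
          have h3 : (a n / n) * m = x + a n * Real.log n := by
            rw [hm_def]; field_simp; ring
          linarith
      set C : ℝ := c - c*m/n + c^2*m/n^2 + c*Real.log n + 2*c^2/(1-c) with hC_def
      clear_value C
      have hchern : (ℙ {ω | m ≤ ∑ k ∈ Finset.Icc 1 n, (X n k ω : ℝ)}).toReal ≤ Real.exp C := by
        rw [hC_def]
        exact chernoff_bound n hn3 (X n) (hX n) (h_indep n)
          (fun k hk1 hkn h hh => h_geom n (by omega) k hk1 hkn h hh) c m hc0 hc1 hm0
      rw [hEset]
      have hle : ℙ {ω | m ≤ ∑ k ∈ Finset.Icc 1 n, (X n k ω : ℝ)}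
          ≤ ENNReal.ofReal (Real.exp C) :=
        (ENNReal.le_ofReal_iff_toReal_le (measure_ne_top _ _) (Real.exp_pos _).le).2 hchern
      have hlog : ENNReal.log (ℙ {ω | m ≤ ∑ k ∈ Finset.Icc 1 n, (X n k ω : ℝ)}) ≤ (C : EReal) := by
        calc ENNReal.log (ℙ {ω | m ≤ ∑ k ∈ Finset.Icc 1 n, (X n k ω : ℝ)})
            ≤ ENNReal.log (ENNReal.ofReal (Real.exp C)) := ENNReal.log_monotone hle
          _ = ((Real.log (Real.exp C) : ℝ) : EReal) := ENNReal.log_ofReal_of_pos (Real.exp_pos C)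
          _ = (C : EReal) := by rw [Real.log_exp]
      have hmul : ((a n : ℝ) : EReal) * ENNReal.log (ℙ {ω | m ≤ ∑ k ∈ Finset.Icc 1 n, (X n k ω : ℝ)})
          ≤ ((a n : ℝ) : EReal) * (C : EReal) :=
        mul_le_mul_of_nonneg_left hlog (EReal.coe_nonneg.2 han.le)
      refine le_trans hmul ?_
      rw [← EReal.coe_mul]
      rw [EReal.coe_le_coe_iff]
      -- real inequality: a n * C ≤ z
      have hkey : a n * C = ((a n * c + 2*c^2 * a n / (1-c))
          + c^2 * (a n * (Real.log n / n) + x / n)) - c*x := by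
        rw [hC_def, hm_def]
        have h1c : (1:ℝ) - c ≠ 0 := by linarith
        field_simp
        ring
      rw [hkey]
      have : -c*x ≤ -x + ε/2 := by linarith
      have hzval : z = -x + ε := by simp only [hε_def]; ring
      linarith
    refine limsup_le_of_le ?_ hev
    isBoundedDefault
end

section
/- For every sequence of positive numbers {a_n} with a_n → 0 and a_n·log n → ∞, and for every x < 0, it holds that a_n · log P(a_n·log n·(T_n/(n·log n) − 1) ≤ x) → −∞ as n → ∞. -/
open Filter MeasureTheory ProbabilityTheory Topology
open scoped ENNReal

set_option maxHeartbeats 2000000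

section Stmt15Aux

lemma aux_log_ge {y : ℝ} (hy : 0 ≤ y) : y / (1 + y) ≤ Real.log (1 + y) := by
  have h1 : (0:ℝ) < 1 + y := by linarith
  have h2 := Real.log_le_sub_one_of_pos (x := (1+y)⁻¹) (by positivity)
  rw [Real.log_inv] at h2
  have : (1+y)⁻¹ - 1 = -(y/(1+y)) := by field_simp; ring
  rw [this] at h2
  linarith

lemma aux_log_le {y : ℝ} (hy : 0 ≤ y) : Real.log (1 + y) ≤ y := by
  have := Real.log_le_sub_one_of_pos (x := 1 + y) (by linarith)
  linarith

lemma aux_sum_inv {w : ℝ} (hw : 0 ≤ w) (n : ℕ) :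
    Real.log ((n:ℝ) + 1 + w) - Real.log (1 + w) ≤ ∑ j ∈ Finset.Icc 1 n, ((j:ℝ) + w)⁻¹ := by
  set g : ℕ → ℝ := fun j => Real.log ((j:ℝ) + 1 + w) with hg
  have key : ∀ j : ℕ, g (j+1) - g j ≤ (((1+j:ℕ):ℝ) + w)⁻¹ := by
    intro j
    have hpos : (0:ℝ) < (j:ℝ) + 1 + w := by positivity
    have hpos2 : (0:ℝ) < ((j+1:ℕ):ℝ) + 1 + w := by positivity
    simp only [hg]
    rw [← Real.log_div (ne_of_gt hpos2) (ne_of_gt hpos)]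
    have h3 := Real.log_le_sub_one_of_pos (x := (((j+1:ℕ):ℝ)+1+w)/((j:ℝ)+1+w)) (by positivity)
    have heq : (((j+1:ℕ):ℝ)+1+w)/((j:ℝ)+1+w) - 1 = (((1+j:ℕ):ℝ) + w)⁻¹ := by
      push_cast; rw [div_sub_one (ne_of_gt hpos)]; ring_nf
    rw [heq] at h3
    exact h3
  calc Real.log ((n:ℝ) + 1 + w) - Real.log (1 + w)
      = ∑ j ∈ Finset.range n, (g (j+1) - g j) := by
        rw [Finset.sum_range_sub g n]; simp [hg]
    _ ≤ ∑ j ∈ Finset.range n, (((1+j:ℕ):ℝ) + w)⁻¹ := Finset.sum_le_sum (fun j _ => key j)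
    _ = ∑ j ∈ Finset.Icc 1 n, ((j:ℝ) + w)⁻¹ := by
        rw [← Finset.Ico_add_one_right_eq_Icc, Finset.sum_Ico_eq_sum_range]; simp

lemma aux_sum_log {w : ℝ} (hw : 0 ≤ w) (n : ℕ) :
    w * (Real.log ((n:ℝ) + 1 + w) - Real.log (1 + w)) ≤
      ∑ j ∈ Finset.Icc 1 n, Real.log (1 + w / (j:ℝ)) := by
  calc w * (Real.log ((n:ℝ) + 1 + w) - Real.log (1 + w))
      ≤ w * ∑ j ∈ Finset.Icc 1 n, ((j:ℝ) + w)⁻¹ :=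
        mul_le_mul_of_nonneg_left (aux_sum_inv hw n) hw
    _ = ∑ j ∈ Finset.Icc 1 n, w * ((j:ℝ) + w)⁻¹ := Finset.mul_sum _ _ _
    _ ≤ ∑ j ∈ Finset.Icc 1 n, Real.log (1 + w / (j:ℝ)) := by
        apply Finset.sum_le_sum
        intro j hj
        have hj1 : 1 ≤ j := (Finset.mem_Icc.mp hj).1
        have hjpos : (0:ℝ) < j := by exact_mod_cast hj1
        have hy : 0 ≤ w / (j:ℝ) := by positivity
        have := aux_log_ge hy
        have heq : w / (j:ℝ) / (1 + w / (j:ℝ)) = w * ((j:ℝ) + w)⁻¹ := by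
          field_simp
        rw [heq] at this
        exact this

lemma aux_mgf {Ω : Type*} [MeasureSpace Ω] [IsProbabilityMeasure (ℙ : Measure Ω)]
    (Y : Ω → ℕ) (hY : Measurable Y) {q : ℝ} (hq0 : 0 ≤ q) (hq1 : q < 1)
    (hpmf : ∀ h : ℕ, 1 ≤ h → (ℙ {ω | Y ω = h}).toReal = q ^ (h - 1) * (1 - q))
    {z : ℝ} (hz0 : 0 ≤ z) (hz1 : z < 1) :
    ∫⁻ ω, (ENNReal.ofReal z) ^ (Y ω) ∂ℙ = ENNReal.ofReal (z * (1 - q) / (1 - z * q)) := by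
  have hq1' : (0:ℝ) ≤ 1 - q := by linarith
  have hzq : 0 ≤ z * q := by positivity
  have hzq1 : z * q < 1 := by nlinarith [mul_le_mul_of_nonneg_left hq1.le hz0]
  have hterm : ∀ h : ℕ, z ^ (h+1) * (q ^ h * (1-q)) = (z*q)^h * (z * (1-q)) := by
    intro h; rw [mul_pow]; ring
  have hsum2 : Summable (fun h : ℕ => z ^ (h+1) * (q ^ h * (1-q))) := by
    simp_rw [hterm]
    exact (summable_geometric_of_lt_one hzq hzq1).mul_right _
  have hfib : ∀ h : ℕ, ℙ {ω | Y ω = h} = ℙ (Y ⁻¹' {h}) := fun h => rfl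
  have hne : ∀ h : ℕ, ℙ (Y ⁻¹' {h}) ≠ ⊤ := fun h => measure_ne_top _ _
  have hpmf' : ∀ h : ℕ, 1 ≤ h → ℙ (Y ⁻¹' {h}) = ENNReal.ofReal (q ^ (h-1) * (1-q)) := by
    intro h hh
    rw [← ENNReal.ofReal_toReal (hne h), ← hfib h, hpmf h hh]
  have htot : (∑' h : ℕ, ℙ (Y ⁻¹' {h})) = 1 := by
    rw [← MeasureTheory.measure_iUnion
      (fun i j hij => Set.disjoint_left.mpr (by intro ω h1 h2; simp at h1 h2; exact hij (h1 ▸ h2 ▸ rfl)))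
      (fun h => hY (measurableSet_singleton h))]
    have : (⋃ h : ℕ, Y ⁻¹' {h}) = Set.univ := by ext ω; simp
    rw [this]; exact measure_univ
  have hsummable : Summable (fun h : ℕ => q ^ h * (1 - q)) :=
    (summable_geometric_of_lt_one hq0 hq1).mul_right _
  have hgeo : (∑' h : ℕ, ENNReal.ofReal (q ^ h * (1 - q))) = 1 := by
    rw [← ENNReal.ofReal_tsum_of_nonneg (fun h => mul_nonneg (pow_nonneg hq0 h) hq1') hsummable]
    rw [tsum_mul_right, tsum_geometric_of_lt_one hq0 hq1, inv_mul_cancel₀ (by linarith)]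
    simp
  have hzero : ℙ (Y ⁻¹' {0}) = 0 := by
    have h1 : (∑' h : ℕ, ℙ (Y ⁻¹' {h})) = ℙ (Y ⁻¹' {0}) + ∑' h : ℕ, ℙ (Y ⁻¹' {h+1}) :=
      tsum_eq_zero_add' ENNReal.summable
    have h2 : (∑' h : ℕ, ℙ (Y ⁻¹' {h+1})) = 1 := by
      rw [← hgeo]
      congr 1; funext h
      rw [hpmf' (h+1) (Nat.le_add_left 1 h)]
      simp
    rw [h2, htot] at h1
    have h3 : ℙ (Y ⁻¹' {0}) + 1 = 0 + 1 := by rw [zero_add, ← h1]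
    exact (ENNReal.add_left_inj ENNReal.one_ne_top).mp h3
  have hmeasg : Measurable (fun m : ℕ => (ENNReal.ofReal z) ^ m) := measurable_from_nat
  rw [← MeasureTheory.lintegral_map hmeasg hY, MeasureTheory.lintegral_countable']
  have hmap : ∀ m : ℕ, (Measure.map Y ℙ) {m} = ℙ (Y ⁻¹' {m}) := fun m =>
    Measure.map_apply hY (measurableSet_singleton m)
  calc (∑' m : ℕ, (ENNReal.ofReal z) ^ m * (Measure.map Y ℙ) {m})
      = (ENNReal.ofReal z) ^ 0 * ℙ (Y ⁻¹' {0}) +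
        ∑' h : ℕ, (ENNReal.ofReal z) ^ (h+1) * ℙ (Y ⁻¹' {h+1}) := by
        simp_rw [hmap]
        exact tsum_eq_zero_add' ENNReal.summable
    _ = ∑' h : ℕ, ENNReal.ofReal (z ^ (h+1) * (q ^ h * (1-q))) := by
        rw [hzero]
        simp only [mul_zero, pow_zero, zero_add]
        congr 1; funext h
        rw [hpmf' (h+1) (Nat.le_add_left 1 h), ← ENNReal.ofReal_pow hz0,
          ← ENNReal.ofReal_mul (by positivity)]
        simp
    _ = ENNReal.ofReal (z * (1 - q) / (1 - z * q)) := by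
        rw [← ENNReal.ofReal_tsum_of_nonneg
          (fun h => mul_nonneg (pow_nonneg hz0 _) (mul_nonneg (pow_nonneg hq0 h) hq1')) hsum2]
        congr 1
        simp_rw [hterm]
        rw [tsum_mul_right, tsum_geometric_of_lt_one hzq hzq1, div_eq_mul_inv]
        ring

lemma aux_lintegral_prod {Ω ι : Type*} [MeasurableSpace Ω] {μ : Measure Ω}
    [IsProbabilityMeasure μ]
    (f : ι → Ω → ℝ≥0∞) (hmeas : ∀ i, Measurable (f i))
    (hindep : iIndepFun f μ) (s : Finset ι) :
    ∫⁻ ω, ∏ i ∈ s, f i ω ∂μ = ∏ i ∈ s, ∫⁻ ω, f i ω ∂μ := by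
  classical
  induction s using Finset.induction with
  | empty => simp
  | @insert a s ha ih =>
      have h1 : IndepFun (f a) (∏ j ∈ s, f j) μ :=
        (hindep.indepFun_finset_prod_of_notMem hmeas ha).symm
      have h2 : Measurable (∏ j ∈ s, f j) := by
        show Measurable fun ω => (∏ j ∈ s, f j) ω
        simp only [Finset.prod_apply]
        exact Finset.measurable_prod _ (fun i _ => hmeas i)
      have h3 := lintegral_mul_eq_lintegral_mul_lintegral_of_indepFun (hmeas a) h2 h1
      have hfun : (fun ω => ∏ i ∈ insert a s, f i ω) = fun ω => (f a * ∏ j ∈ s, f j) ω :=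
        funext fun ω => by simp [Finset.prod_insert ha, Finset.prod_apply]
      rw [hfun, h3, Finset.prod_insert ha, ← ih]
      congr 1
      exact lintegral_congr fun ω => by simp [Finset.prod_apply]

lemma aux_chernoff {Ω : Type*} [MeasureSpace Ω] [IsProbabilityMeasure (ℙ : Measure Ω)]
    {n : ℕ} (X : ℕ → Ω → ℕ) (hX : ∀ k, Measurable (X k))
    (hindep : iIndepFun (fun k : Set.Icc 1 n => X (k : ℕ)) ℙ)
    (z : ℝ≥0∞) (hz : z ≤ 1) (N : ℕ) :
    ℙ {ω | ∑ k ∈ Finset.Icc 1 n, X k ω ≤ N} * z ^ N ≤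
      ∏ k ∈ Finset.Icc 1 n, ∫⁻ ω, z ^ (X k ω) ∂ℙ := by
  have hmeasf : Measurable (fun ω => z ^ (∑ k ∈ Finset.Icc 1 n, X k ω)) :=
    measurable_from_nat.comp (Finset.measurable_sum _ (fun k _ => hX k))
  have hrw : ∀ ω, z ^ (∑ k ∈ Finset.Icc 1 n, X k ω) = ∏ i : Set.Icc 1 n, z ^ (X (i:ℕ) ω) := by
    intro ω
    rw [Finset.prod_pow_eq_pow_sum]
    congr 1
    rw [Finset.sum_set_coe (f := fun k => X k ω), Set.toFinset_Icc]
  calc ℙ {ω | ∑ k ∈ Finset.Icc 1 n, X k ω ≤ N} * z ^ N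
      ≤ ∫⁻ ω, z ^ (∑ k ∈ Finset.Icc 1 n, X k ω) ∂ℙ := by
        rw [mul_comm]
        refine le_trans ?_ (mul_meas_ge_le_lintegral₀ hmeasf.aemeasurable (z ^ N))
        apply mul_le_mul_right
        apply measure_mono
        intro ω hω
        exact pow_le_pow_of_le_one zero_le hz hω
    _ = ∫⁻ ω, ∏ i : Set.Icc 1 n, z ^ (X (i:ℕ) ω) ∂ℙ := lintegral_congr fun ω => hrw ω
    _ = ∏ i : Set.Icc 1 n, ∫⁻ ω, z ^ (X (i:ℕ) ω) ∂ℙ :=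
        aux_lintegral_prod (μ := ℙ) (fun i : Set.Icc 1 n => fun ω => z ^ (X (i:ℕ) ω))
          (fun i => measurable_from_nat.comp (hX i))
          (hindep.comp (fun _ => fun m => z ^ m) (fun _ => measurable_from_nat)) Finset.univ
    _ = ∏ k ∈ Finset.Icc 1 n, ∫⁻ ω, z ^ (X k ω) ∂ℙ := by
        rw [Finset.prod_set_coe (f := fun k => ∫⁻ ω, z ^ (X k ω) ∂ℙ), Set.toFinset_Icc]

lemma aux_prob_bound {Ω : Type*} [MeasureSpace Ω] [IsProbabilityMeasure (ℙ : Measure Ω)]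
    {n : ℕ} (hn : 1 ≤ n) (X : ℕ → Ω → ℕ) (hX : ∀ k, Measurable (X k))
    (hindep : iIndepFun (fun k : Set.Icc 1 n => X (k : ℕ)) ℙ)
    (hgeom : ∀ k : ℕ, 1 ≤ k → k ≤ n → ∀ h : ℕ, 1 ≤ h →
      (ℙ {ω | X k ω = h}).toReal = ((k - 1 : ℝ) / n) ^ (h - 1) * (1 - (k - 1 : ℝ) / n))
    {w : ℝ} (hw : 1 ≤ w) (N : ℕ) :
    ℙ {ω | ∑ k ∈ Finset.Icc 1 n, X k ω ≤ N} ≤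
      ENNReal.ofReal ((((n:ℝ) + w) / n) ^ N *
        ∏ k ∈ Finset.Icc 1 n, (((n:ℝ) + 1 - k) / (((n:ℝ) + 1 - k) + w))) := by
  have hnpos : (0:ℝ) < n := by exact_mod_cast hn
  have hwpos : (0:ℝ) < w := by linarith
  set z : ℝ := (n:ℝ) / ((n:ℝ) + w) with hzdef
  have hz0 : 0 < z := by positivity
  have hz1 : z < 1 := by
    rw [hzdef, div_lt_one (by linarith)]; linarith
  -- MGF values
  have hmgf : ∀ k : ℕ, 1 ≤ k → k ≤ n →
      ∫⁻ ω, (ENNReal.ofReal z) ^ (X k ω) ∂ℙ =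
        ENNReal.ofReal (((n:ℝ) + 1 - k) / (((n:ℝ) + 1 - k) + w)) := by
    intro k hk1 hkn
    have hkn' : (k:ℝ) ≤ n := by exact_mod_cast hkn
    have hk1' : (1:ℝ) ≤ k := by exact_mod_cast hk1
    have hq0 : (0:ℝ) ≤ ((k:ℝ) - 1) / n := by
      apply div_nonneg (by linarith) hnpos.le
    have hq1 : ((k:ℝ) - 1) / n < 1 := by
      rw [div_lt_one hnpos]; linarith
    rw [aux_mgf (X k) (hX k) hq0 hq1 (hgeom k hk1 hkn) hz0.le hz1]
    congr 1
    have h1 : (0:ℝ) < (n:ℝ) + 1 - k + w := by linarith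
    have h2 : (0:ℝ) < (n:ℝ) + w := by linarith
    have e1 : 1 - ((k:ℝ) - 1) / n = ((n:ℝ) + 1 - k) / n := by
      field_simp; ring
    have e2 : 1 - z * (((k:ℝ) - 1) / n) = ((n:ℝ) + 1 - k + w) / ((n:ℝ) + w) := by
      rw [hzdef]; field_simp; ring
    rw [e1, e2, hzdef]
    rw [div_mul_div_comm, div_div_div_eq]
    rw [div_eq_div_iff (by positivity) (by positivity)]
    ring
  -- apply chernoff
  have hch := aux_chernoff X hX hindep (ENNReal.ofReal z) (by
    rw [← ENNReal.ofReal_one]; exact ENNReal.ofReal_le_ofReal hz1.le) N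
  have hprod : (∏ k ∈ Finset.Icc 1 n, ∫⁻ ω, (ENNReal.ofReal z) ^ (X k ω) ∂ℙ) =
      ENNReal.ofReal (∏ k ∈ Finset.Icc 1 n, (((n:ℝ) + 1 - k) / (((n:ℝ) + 1 - k) + w))) := by
    rw [Finset.prod_congr rfl (fun k hk => hmgf k (Finset.mem_Icc.mp hk).1 (Finset.mem_Icc.mp hk).2)]
    rw [← ENNReal.ofReal_prod_of_nonneg]
    intro k hk
    obtain ⟨hk1, hkn⟩ := Finset.mem_Icc.mp hk
    have hkn' : (k:ℝ) ≤ n := by exact_mod_cast hkn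
    have h1 : (0:ℝ) ≤ (n:ℝ) + 1 - k := by linarith
    positivity
  rw [hprod] at hch
  -- divide by z^N
  have hzN : (ENNReal.ofReal z) ^ N ≠ 0 := by
    apply pow_ne_zero; simp [ENNReal.ofReal_eq_zero]; linarith
  have hzNt : (ENNReal.ofReal z) ^ N ≠ ⊤ := by
    exact ENNReal.pow_ne_top ENNReal.ofReal_ne_top
  have hle : ℙ {ω | ∑ k ∈ Finset.Icc 1 n, X k ω ≤ N} ≤
      ENNReal.ofReal (∏ k ∈ Finset.Icc 1 n, (((n:ℝ) + 1 - k) / (((n:ℝ) + 1 - k) + w))) /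
        (ENNReal.ofReal z) ^ N :=
    (ENNReal.le_div_iff_mul_le (Or.inl hzN) (Or.inl hzNt)).mpr hch
  refine hle.trans ?_
  rw [← ENNReal.ofReal_pow hz0.le, ← ENNReal.ofReal_div_of_pos (by positivity)]
  apply ENNReal.ofReal_le_ofReal
  rw [div_eq_mul_inv, ← inv_pow, hzdef, inv_div, mul_comm]

lemma aux_reindex (n : ℕ) (w : ℝ) :
    ∑ k ∈ Finset.Icc 1 n, Real.log (1 + w / ((n:ℝ) + 1 - k)) =
      ∑ j ∈ Finset.Icc 1 n, Real.log (1 + w / (j:ℝ)) := by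
  apply Finset.sum_nbij' (i := fun k => n + 1 - k) (j := fun j => n + 1 - j)
  · intro a ha
    obtain ⟨h1, h2⟩ := Finset.mem_Icc.mp ha
    rw [Finset.mem_Icc]
    omega
  · intro a ha
    obtain ⟨h1, h2⟩ := Finset.mem_Icc.mp ha
    rw [Finset.mem_Icc]
    omega
  · intro a ha; obtain ⟨h1, h2⟩ := Finset.mem_Icc.mp ha; omega
  · intro a ha; obtain ⟨h1, h2⟩ := Finset.mem_Icc.mp ha; omega
  · intro a ha
    obtain ⟨h1, h2⟩ := Finset.mem_Icc.mp ha
    congr 2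
    have : ((n + 1 - a : ℕ) : ℝ) = (n:ℝ) + 1 - a := by
      have : a ≤ n + 1 := by omega
      push_cast [Nat.cast_sub this]
      ring
    rw [this]

end Stmt15Aux

/-- For every `x < 0`, `a_n * log P(a_n * log n * (T_n/(n log n) - 1) ≤ x) → -∞`. -/
theorem stmt_15
    {Ω : Type*} [MeasureSpace Ω] [IsProbabilityMeasure (ℙ : Measure Ω)]
    (X : ℕ → ℕ → Ω → ℕ) (hX : ∀ n k, Measurable (X n k))
    (h_indep : ∀ n : ℕ, iIndepFun
      (fun k : Set.Icc 1 n => X n (k : ℕ)) ℙ)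
    (h_geom : ∀ n : ℕ, 1 ≤ n → ∀ k : ℕ, 1 ≤ k → k ≤ n → ∀ h : ℕ, 1 ≤ h →
      (ℙ {ω | X n k ω = h}).toReal = ((k - 1 : ℝ) / n) ^ (h - 1) * (1 - (k - 1 : ℝ) / n))
    (a : ℕ → ℝ) (ha_pos : ∀ n, 0 < a n) (ha_zero : Tendsto a atTop (nhds 0))
    (ha_top : Tendsto (fun n : ℕ => a n * Real.log n) atTop atTop) :
    ∀ x : ℝ, x < 0 →
      Tendsto (fun n : ℕ => ((a n : ℝ) : EReal) *
          ENNReal.log (ℙ {ω | a n * Real.log n *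
            ((∑ k ∈ Finset.Icc 1 n, (X n k ω : ℝ)) / (n * Real.log n) - 1) ≤ x})) atTop
        (nhds (⊥ : EReal)) := by
  intro x hx
  have hb_bot : Tendsto (fun n => x / 4 * Real.exp (-x / (2 * a n))) atTop atBot := by
    have h1 : Tendsto (fun n => (a n)⁻¹) atTop atTop := by
      apply Filter.Tendsto.inv_tendsto_nhdsGT_zero
      rw [tendsto_nhdsWithin_iff]
      exact ⟨ha_zero, Filter.Eventually.of_forall (fun n => ha_pos n)⟩
    have h2 : Tendsto (fun n => -x / (2 * a n)) atTop atTop := by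
      have : ∀ n, -x / (2 * a n) = (-x / 2) * (a n)⁻¹ := by
        intro n; field_simp
      simp_rw [this]
      exact h1.const_mul_atTop (by linarith)
    have h3 : Tendsto (fun n => Real.exp (-x / (2 * a n))) atTop atTop :=
      Real.tendsto_exp_atTop.comp h2
    have h4 : Tendsto (fun n => -(x / 4) * Real.exp (-x / (2 * a n))) atTop atTop :=
      h3.const_mul_atTop (by linarith)
    have : (fun n : ℕ => x / 4 * Real.exp (-x / (2 * a n))) =
        fun n => -(-(x / 4) * Real.exp (-x / (2 * a n))) := by
      funext n; ring
    rw [this]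
    exact tendsto_neg_atTop_atBot.comp h4
  -- the key eventual bound
  have key : ∀ᶠ n in atTop, ((a n : ℝ) : EReal) *
      ENNReal.log (ℙ {ω | a n * Real.log n *
        ((∑ k ∈ Finset.Icc 1 n, (X n k ω : ℝ)) / (n * Real.log n) - 1) ≤ x}) ≤
          ((x / 4 * Real.exp (-x / (2 * a n)) : ℝ) : EReal) := by
    have E1 : ∀ᶠ n : ℕ in atTop, 2 ≤ n := eventually_ge_atTop 2
    have E2 : ∀ᶠ n : ℕ in atTop, 1 - x ≤ a n * Real.log n := ha_top.eventually_ge_atTop _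
    have E3 : ∀ᶠ n : ℕ in atTop, a n ≤ 1 :=
      ha_zero.eventually (eventually_le_nhds (by norm_num))
    have E4 : ∀ᶠ n : ℕ in atTop, a n ≤ -x / (4 * Real.log 2) := by
      apply ha_zero.eventually (eventually_le_nhds ?_)
      have h2 : (0:ℝ) < Real.log 2 := Real.log_pos (by norm_num)
      have hx' : (0:ℝ) < -x := by linarith
      positivity
    filter_upwards [E1, E2, E3, E4] with n hn2 hE2 hE3 hE4
    have han : 0 < a n := ha_pos n
    have hnpos : (0:ℝ) < n := by positivity
    have hn1 : (1:ℝ) < n := by exact_mod_cast hn2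
    have hlogn : 0 < Real.log n := Real.log_pos hn1
    have hlog2 : (0:ℝ) < Real.log 2 := Real.log_pos (by norm_num)
    set c : ℝ := -x / a n with hc_def
    have hx' : (0:ℝ) < -x := by linarith
    have hc : 0 < c := by positivity
    set w : ℝ := Real.exp (c / 2) with hw_def
    have hw1 : 1 ≤ w := Real.one_le_exp (by positivity)
    have hw0 : 0 < w := by linarith
    set t : ℝ := n * Real.log n + x * n / a n with ht_def
    have ht_eq : t = n * (Real.log n - c) := by
      rw [ht_def, hc_def]; field_simp; ring
    have hlc : 1 ≤ Real.log n - c := by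
      have h5 : a n * (Real.log n - c) = a n * Real.log n + x := by
        rw [hc_def]; field_simp; ring
      have h6 : a n * Real.log n + x ≥ a n * 1 := by linarith
      rw [← h5] at h6
      exact le_of_mul_le_mul_left h6 han
    have ht_nonneg : 0 ≤ t := by
      rw [ht_eq]; nlinarith
    set N : ℕ := ⌊t⌋₊ with hN_def
    have hNt : (N:ℝ) ≤ t := Nat.floor_le ht_nonneg
    -- event inclusion
    have hsub : {ω | a n * Real.log n *
        ((∑ k ∈ Finset.Icc 1 n, (X n k ω : ℝ)) / (n * Real.log n) - 1) ≤ x} ⊆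
        {ω | ∑ k ∈ Finset.Icc 1 n, X n k ω ≤ N} := by
      intro ω hω
      simp only [Set.mem_setOf_eq] at hω ⊢
      set S : ℝ := ∑ k ∈ Finset.Icc 1 n, (X n k ω : ℝ) with hS_def
      have hprod_pos : 0 < a n * Real.log n := by positivity
      have hω' : (S / (n * Real.log n) - 1) * (a n * Real.log n) ≤ x := by
        rw [mul_comm]; exact hω
      have h6 : S / (n * Real.log n) - 1 ≤ x / (a n * Real.log n) :=
        (le_div_iff₀ hprod_pos).mpr hω'
      have hnl : 0 < (n:ℝ) * Real.log n := by positivity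
      have h7 : S ≤ (1 + x / (a n * Real.log n)) * (n * Real.log n) :=
        (div_le_iff₀ hnl).mp (by linarith)
      have h8 : (1 + x / (a n * Real.log n)) * ((n:ℝ) * Real.log n) = t := by
        rw [ht_def]; field_simp
      have h9 : S ≤ t := by linarith [h8 ▸ h7]
      have h10 : ((∑ k ∈ Finset.Icc 1 n, X n k ω : ℕ) : ℝ) ≤ t := by
        rw [Nat.cast_sum]; exact h9
      exact Nat.le_floor h10
    -- probability bound
    have hPbound : ℙ {ω | a n * Real.log n *
        ((∑ k ∈ Finset.Icc 1 n, (X n k ω : ℝ)) / (n * Real.log n) - 1) ≤ x} ≤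
        ENNReal.ofReal ((((n:ℝ) + w) / n) ^ N *
          ∏ k ∈ Finset.Icc 1 n, (((n:ℝ) + 1 - k) / (((n:ℝ) + 1 - k) + w))) :=
      (measure_mono hsub).trans
        (aux_prob_bound (by omega) (X n) (hX n) (h_indep n) (h_geom n (by omega)) hw1 N)
    -- positivity of the bound
    have hjpos : ∀ k ∈ Finset.Icc 1 n, (0:ℝ) < (n:ℝ) + 1 - k := by
      intro k hk
      obtain ⟨hk1, hkn⟩ := Finset.mem_Icc.mp hk
      have : (k:ℝ) ≤ n := by exact_mod_cast hkn
      linarith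
    have hApos : (0:ℝ) < ((n:ℝ) + w) / n := by positivity
    have hPpos : (0:ℝ) < ∏ k ∈ Finset.Icc 1 n, (((n:ℝ) + 1 - k) / (((n:ℝ) + 1 - k) + w)) := by
      apply Finset.prod_pos
      intro k hk
      have := hjpos k hk
      positivity
    have hMpos : (0:ℝ) < (((n:ℝ) + w) / n) ^ N *
        ∏ k ∈ Finset.Icc 1 n, (((n:ℝ) + 1 - k) / (((n:ℝ) + 1 - k) + w)) := by positivity
    -- log of the bound
    have hlogM : Real.log ((((n:ℝ) + w) / n) ^ N *
        ∏ k ∈ Finset.Icc 1 n, (((n:ℝ) + 1 - k) / (((n:ℝ) + 1 - k) + w))) ≤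
        w * (Real.log 2 - c / 2) := by
      rw [Real.log_mul (by positivity) (ne_of_gt hPpos), Real.log_pow,
        Real.log_prod (fun k hk => by have := hjpos k hk; positivity)]
      -- term 1
      have hT1 : (N:ℝ) * Real.log (((n:ℝ) + w) / n) ≤ (Real.log n - c) * w := by
        have hA1 : ((n:ℝ) + w) / n = 1 + w / n := by field_simp
        have hlogA : Real.log (((n:ℝ) + w) / n) ≤ w / n := by
          rw [hA1]; exact aux_log_le (by positivity)
        have hlogA0 : 0 ≤ Real.log (((n:ℝ) + w) / n) := by
          apply Real.log_nonneg; rw [hA1]; nlinarith [div_nonneg hw0.le hnpos.le]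
        calc (N:ℝ) * Real.log (((n:ℝ) + w) / n) ≤ t * (w / n) :=
              mul_le_mul hNt hlogA hlogA0 ht_nonneg
          _ = (Real.log n - c) * w := by rw [ht_eq]; field_simp
      -- term 2
      have hT2 : ∑ k ∈ Finset.Icc 1 n, Real.log (((n:ℝ) + 1 - k) / (((n:ℝ) + 1 - k) + w)) ≤
          -(w * (Real.log n - (Real.log 2 + c / 2))) := by
        have hrw2 : ∀ k ∈ Finset.Icc 1 n,
            Real.log (((n:ℝ) + 1 - k) / (((n:ℝ) + 1 - k) + w)) =
              -Real.log (1 + w / ((n:ℝ) + 1 - k)) := by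
          intro k hk
          have hj := hjpos k hk
          rw [← Real.log_inv]
          congr 1
          have hj' : (1 + w / ((n:ℝ) + 1 - k)) = (((n:ℝ) + 1 - k) + w) / ((n:ℝ) + 1 - k) := by
            field_simp
          rw [hj', inv_div]
        rw [Finset.sum_congr rfl hrw2, Finset.sum_neg_distrib, aux_reindex n w]
        apply neg_le_neg
        refine le_trans ?_ (aux_sum_log hw0.le n)
        apply mul_le_mul_of_nonneg_left ?_ hw0.le
        have hlb : Real.log n ≤ Real.log ((n:ℝ) + 1 + w) :=
          Real.log_le_log hnpos (by linarith)
        have hub : Real.log (1 + w) ≤ Real.log 2 + c / 2 := by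
          calc Real.log (1 + w) ≤ Real.log (2 * w) :=
                Real.log_le_log (by linarith) (by linarith)
            _ = Real.log 2 + Real.log w := Real.log_mul two_ne_zero (ne_of_gt hw0)
            _ = Real.log 2 + c / 2 := by rw [hw_def, Real.log_exp]
        linarith
      have hfin : (Real.log n - c) * w + -(w * (Real.log n - (Real.log 2 + c / 2))) =
          w * (Real.log 2 - c / 2) := by ring
      linarith
    -- final EReal chain
    have hreal : a n * (w * (Real.log 2 - c / 2)) ≤ x / 4 * Real.exp (-x / (2 * a n)) := by
      have hac : a n * c = -x := by rw [hc_def]; field_simp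
      have e1 : a n * (w * (Real.log 2 - c / 2)) = w * (a n * Real.log 2 + x / 2) := by
        have : a n * (Real.log 2 - c / 2) = a n * Real.log 2 - (a n * c) / 2 := by ring
        rw [hc_def]; field_simp; ring
      have e2 : a n * Real.log 2 + x / 2 ≤ x / 4 := by
        have : a n * (4 * Real.log 2) ≤ -x := by
          rw [← le_div_iff₀ (by positivity)] 
          exact hE4
        nlinarith
      have e3 : w * (a n * Real.log 2 + x / 2) ≤ w * (x / 4) :=
        mul_le_mul_of_nonneg_left e2 hw0.le
      have e4 : w * (x / 4) = x / 4 * Real.exp (-x / (2 * a n)) := by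
        rw [hw_def, hc_def, mul_comm]
        congr 2
        rw [div_div, mul_comm (a n) 2]
      rw [e1]
      linarith [e4 ▸ e3]
    have hlogP : ENNReal.log (ℙ {ω | a n * Real.log n *
        ((∑ k ∈ Finset.Icc 1 n, (X n k ω : ℝ)) / (n * Real.log n) - 1) ≤ x}) ≤
        ((Real.log ((((n:ℝ) + w) / n) ^ N *
          ∏ k ∈ Finset.Icc 1 n, (((n:ℝ) + 1 - k) / (((n:ℝ) + 1 - k) + w))) : ℝ) : EReal) := by
      rw [← ENNReal.log_ofReal_of_pos hMpos]
      exact ENNReal.log_monotone hPbound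
    calc ((a n : ℝ) : EReal) * ENNReal.log (ℙ {ω | a n * Real.log n *
          ((∑ k ∈ Finset.Icc 1 n, (X n k ω : ℝ)) / (n * Real.log n) - 1) ≤ x})
        ≤ ((a n : ℝ) : EReal) * ((Real.log ((((n:ℝ) + w) / n) ^ N *
            ∏ k ∈ Finset.Icc 1 n, (((n:ℝ) + 1 - k) / (((n:ℝ) + 1 - k) + w))) : ℝ) : EReal) :=
          mul_le_mul_of_nonneg_left hlogP (by exact_mod_cast han.le)
      _ = ((a n * Real.log ((((n:ℝ) + w) / n) ^ N *
            ∏ k ∈ Finset.Icc 1 n, (((n:ℝ) + 1 - k) / (((n:ℝ) + 1 - k) + w))) : ℝ) : EReal) :=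
          (EReal.coe_mul _ _).symm
      _ ≤ ((x / 4 * Real.exp (-x / (2 * a n)) : ℝ) : EReal) := by
          rw [EReal.coe_le_coe_iff]
          calc a n * Real.log ((((n:ℝ) + w) / n) ^ N *
                ∏ k ∈ Finset.Icc 1 n, (((n:ℝ) + 1 - k) / (((n:ℝ) + 1 - k) + w)))
              ≤ a n * (w * (Real.log 2 - c / 2)) := mul_le_mul_of_nonneg_left hlogM han.le
            _ ≤ x / 4 * Real.exp (-x / (2 * a n)) := hreal
  rw [EReal.tendsto_nhds_bot_iff_real]
  intro r
  filter_upwards [key, hb_bot.eventually (eventually_lt_atBot r)] with n h1 h2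
  exact lt_of_le_of_lt h1 (by exact_mod_cast h2)
end

section
/- Under the stated assumptions on F, G, t, β and {Z_n}, and assuming the left derivative F′(t−) and the right derivative G′(t+) exist and are strictly positive, the random variables n·(Z_n − t) converge weakly, as n → ∞, to the asymmetric Laplace distribution with distribution function H given by H(x) = β·exp( (F′(t−)/F(t))·x ) for x ≤ 0 and H(x) = 1 − (1−β)·exp( −(G′(t+)/(1−G(t)))·x ) for x > 0; i.e. P(n·(Z_n − t) ≤ x) → H(x) for every x ∈ ℝ. -/
open Filter Topology

lemma aux_pow_exp (c : ℕ → ℝ) (L : ℝ)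
    (hpos : ∀ᶠ n in atTop, 0 < c n) (hne : ∀ᶠ n in atTop, c n ≠ 1)
    (h : Tendsto (fun n : ℕ => (n : ℝ) * (c n - 1)) atTop (𝓝 L)) :
    Tendsto (fun n : ℕ => c n ^ n) atTop (𝓝 (Real.exp L)) := by
  have hinv : Tendsto (fun n : ℕ => ((n : ℝ))⁻¹) atTop (𝓝 0) :=
    tendsto_inv_atTop_nhds_zero_nat
  have hc1 : Tendsto c atTop (𝓝 1) := by
    have h0 : Tendsto (fun n : ℕ => ((n : ℝ) * (c n - 1)) * ((n : ℝ))⁻¹) atTop (𝓝 (L * 0)) :=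
      h.mul hinv
    rw [mul_zero] at h0
    have h1 : Tendsto (fun n : ℕ => c n - 1) atTop (𝓝 0) := by
      apply h0.congr'
      filter_upwards [eventually_ge_atTop 1] with n hn
      have : (n : ℝ) ≠ 0 := Nat.cast_ne_zero.mpr (by omega)
      field_simp
    simpa using h1.add_const 1
  have hd : HasDerivAt Real.log 1 1 := by simpa using Real.hasDerivAt_log one_ne_zero
  have hs := hasDerivAt_iff_tendsto_slope.mp hd
  have hcn : Tendsto c atTop (𝓝[≠] (1:ℝ)) :=
    tendsto_nhdsWithin_of_tendsto_nhds_of_eventually_within _ hc1 hne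
  have hslope : Tendsto (fun n : ℕ => Real.log (c n) / (c n - 1)) atTop (𝓝 1) := by
    have := hs.comp hcn
    apply this.congr
    intro n
    simp [slope_def_field, Real.log_one]
  have hlog : Tendsto (fun n : ℕ => (n : ℝ) * Real.log (c n)) atTop (𝓝 L) := by
    have h2 := h.mul hslope
    rw [mul_one] at h2
    apply h2.congr'
    filter_upwards [hne] with n hn
    have : c n - 1 ≠ 0 := sub_ne_zero.mpr hn
    field_simp
  have h3 := (Real.continuous_exp.tendsto L).comp hlog
  apply h3.congr'
  filter_upwards [hpos] with n hn
  simp only [Function.comp_apply]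
  rw [Real.exp_nat_mul, Real.exp_log hn]

lemma aux_slope (f : ℝ → ℝ) (d t x : ℝ) (s : Set ℝ) (hf : HasDerivWithinAt f d s t)
    (hmem : ∀ᶠ n : ℕ in atTop, t + x / n ∈ s) (hx : x ≠ 0) :
    Tendsto (fun n : ℕ => (n : ℝ) * (f (t + x / n) - f t)) atTop (𝓝 (d * x)) := by
  have hslope := hasDerivWithinAt_iff_tendsto_slope.mp hf
  have hx0 : Tendsto (fun n : ℕ => x / n) atTop (𝓝 0) := by
    simpa [div_eq_mul_inv] using tendsto_inv_atTop_nhds_zero_nat.const_mul x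
  have hu : Tendsto (fun n : ℕ => t + x / n) atTop (𝓝[s \ {t}] t) := by
    apply tendsto_nhdsWithin_of_tendsto_nhds_of_eventually_within
    · simpa using tendsto_const_nhds.add hx0
    · filter_upwards [hmem, eventually_ge_atTop 1] with n hn hn1
      refine ⟨hn, ?_⟩
      have hnn : (n : ℝ) ≠ 0 := Nat.cast_ne_zero.mpr (by omega)
      simp only [Set.mem_singleton_iff]
      intro hcontra
      apply hx
      have : x / n = 0 := by linarith [hcontra]
      field_simp at this
      simpa using this
  have h2 := (hslope.comp hu).mul_const x
  apply h2.congr'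
  filter_upwards [eventually_ge_atTop 1] with n hn
  have hnn : (n : ℝ) ≠ 0 := Nat.cast_ne_zero.mpr (by omega)
  simp only [Function.comp_apply, slope_def_field]
  rw [add_sub_cancel_left]
  field_simp
open MeasureTheory ProbabilityTheory
open scoped ENNReal

/-- Weak convergence of `n * (Z_n - t)` to the asymmetric Laplace distribution with
distribution function `H(x) = β exp((F'(t-)/F(t)) x)` for `x ≤ 0` and
`H(x) = 1 - (1-β) exp(-(G'(t+)/(1-G(t))) x)` for `x > 0`. -/
theorem stmt_17
    {Ω : Type*} [MeasureSpace Ω] [IsProbabilityMeasure (ℙ : Measure Ω)]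
    (F G : ℝ → ℝ) (hF_cont : Continuous F) (hG_cont : Continuous G)
    (hF_mono : Monotone F) (hG_mono : Monotone G)
    (hF0 : F 0 = 0) (hG0 : G 0 = 0)
    (hF_strict : StrictMonoOn F (Set.Ici 0)) (hG_strict : StrictMonoOn G (Set.Ici 0))
    (hF_bot : Tendsto F atBot (nhds 0)) (hF_top : Tendsto F atTop (nhds 1))
    (hG_bot : Tendsto G atBot (nhds 0)) (hG_top : Tendsto G atTop (nhds 1))
    (t : ℝ) (ht : 0 < t) (β : ℝ) (hβ : 0 < β) (hβ1 : β < 1)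
    (Z : ℕ → Ω → ℝ) (hZ : ∀ n, Measurable (Z n))
    (hZ_le : ∀ n : ℕ, 1 ≤ n → ∀ x : ℝ, 0 ≤ x → x ≤ t →
      (ℙ {ω | Z n ω ≤ x}).toReal = β * (F x / F t) ^ n)
    (hZ_gt : ∀ n : ℕ, 1 ≤ n → ∀ x : ℝ, t < x →
      (ℙ {ω | Z n ω ≤ x}).toReal = 1 - (1 - β) * ((1 - G x) / (1 - G t)) ^ n)
    (Fd Gd : ℝ) (hFd_pos : 0 < Fd) (hGd_pos : 0 < Gd)
    (hFd : HasDerivWithinAt F Fd (Set.Iio t) t)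
    (hGd : HasDerivWithinAt G Gd (Set.Ioi t) t) :
    ∀ x : ℝ,
      Tendsto (fun n : ℕ => (ℙ {ω | (n : ℝ) * (Z n ω - t) ≤ x}).toReal) atTop
        (nhds (if x ≤ 0 then β * Real.exp (Fd / F t * x)
          else 1 - (1 - β) * Real.exp (-(Gd / (1 - G t)) * x))) := by
  have hFt : 0 < F t := by
    have := hF_strict (Set.self_mem_Ici) (le_of_lt ht) ht
    rwa [hF0] at this
  have hG_le1 : ∀ y : ℝ, G y ≤ 1 := fun y => hG_mono.ge_of_tendsto hG_top y
  have hGt1 : G t < 1 := by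
    have h1 : G t < G (t + 1) := hG_strict (Set.mem_Ici.mpr (le_of_lt ht)) (Set.mem_Ici.mpr (by linarith)) (by linarith)
    exact lt_of_lt_of_le h1 (hG_le1 _)
  -- set rewriting
  have hset : ∀ (x : ℝ) (n : ℕ), 1 ≤ n →
      {ω : Ω | (n : ℝ) * (Z n ω - t) ≤ x} = {ω : Ω | Z n ω ≤ t + x / n} := by
    intro x n hn
    have hnp : (0 : ℝ) < n := by exact_mod_cast Nat.pos_of_ne_zero (by omega)
    ext ω
    simp only [Set.mem_setOf_eq]
    rw [mul_comm, ← le_div_iff₀ hnp, sub_le_iff_le_add, add_comm]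
  intro x
  rcases lt_trichotomy x 0 with hx | hx | hx
  · -- x < 0
    rw [if_pos hx.le]
    set c : ℕ → ℝ := fun n => F (t + x / n) / F t with hc
    have hx0 : Tendsto (fun n : ℕ => x / n) atTop (𝓝 0) := by
      simpa [div_eq_mul_inv] using tendsto_inv_atTop_nhds_zero_nat.const_mul x
    have hpos_u : ∀ᶠ n : ℕ in atTop, 0 < t + x / n := by
      have := hx0.eventually (eventually_gt_nhds (show -t < 0 by linarith))
      filter_upwards [this] with n hn; linarith
    have hlt_u : ∀ᶠ n : ℕ in atTop, t + x / n < t := by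
      filter_upwards [eventually_ge_atTop 1] with n hn
      have hnp : (0 : ℝ) < n := by exact_mod_cast Nat.pos_of_ne_zero (by omega)
      have : x / n < 0 := div_neg_of_neg_of_pos hx hnp
      linarith
    have hmem : ∀ᶠ n : ℕ in atTop, t + x / n ∈ Set.Iio t := hlt_u
    have hslope := aux_slope F Fd t x (Set.Iio t) hFd hmem (ne_of_lt hx)
    have hmul : Tendsto (fun n : ℕ => (n : ℝ) * (c n - 1)) atTop (𝓝 (Fd * x / F t)) := by
      have := hslope.div_const (F t)
      apply this.congr
      intro n
      simp only [hc]
      field_simp [hc]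
    have hcpos : ∀ᶠ n : ℕ in atTop, 0 < c n := by
      filter_upwards [hpos_u] with n hn
      have : 0 < F (t + x / n) := by
        have := hF_strict Set.self_mem_Ici (le_of_lt hn) hn
        rwa [hF0] at this
      exact div_pos this hFt
    have hcne : ∀ᶠ n : ℕ in atTop, c n ≠ 1 := by
      filter_upwards [hpos_u, hlt_u] with n hn1 hn2
      have : F (t + x / n) < F t := hF_strict (le_of_lt hn1) (le_of_lt ht) hn2
      have hlt : c n < 1 := (div_lt_one hFt).mpr this
      exact ne_of_lt hlt
    have hpow := aux_pow_exp c (Fd * x / F t) hcpos hcne hmul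
    have hfin := hpow.const_mul β
    have harg : Fd * x / F t = Fd / F t * x := by ring
    rw [← harg]
    apply hfin.congr'
    filter_upwards [eventually_ge_atTop 1, hpos_u, hlt_u] with n hn hu1 hu2
    rw [hset x n hn, hZ_le n hn (t + x / n) (le_of_lt hu1) (le_of_lt hu2)]
  · -- x = 0
    subst hx
    rw [if_pos le_rfl, mul_zero, Real.exp_zero, mul_one]
    apply Tendsto.congr' _ (tendsto_const_nhds (x := β))
    filter_upwards [eventually_ge_atTop 1] with n hn
    have : t + (0:ℝ) / n = t := by simp
    rw [hset 0 n hn, this, hZ_le n hn t (le_of_lt ht) le_rfl, div_self (ne_of_gt hFt),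
      one_pow, mul_one]
  · -- x > 0
    rw [if_neg (not_le.mpr hx)]
    set c : ℕ → ℝ := fun n => (1 - G (t + x / n)) / (1 - G t) with hc
    have h1Gt : 0 < 1 - G t := by linarith
    have hgt_u : ∀ᶠ n : ℕ in atTop, t < t + x / n := by
      filter_upwards [eventually_ge_atTop 1] with n hn
      have hnp : (0 : ℝ) < n := by exact_mod_cast Nat.pos_of_ne_zero (by omega)
      have : 0 < x / n := div_pos hx hnp
      linarith
    have hmem : ∀ᶠ n : ℕ in atTop, t + x / n ∈ Set.Ioi t := hgt_u
    have hslope := aux_slope G Gd t x (Set.Ioi t) hGd hmem (ne_of_gt hx)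
    have hmul : Tendsto (fun n : ℕ => (n : ℝ) * (c n - 1)) atTop (𝓝 (-(Gd / (1 - G t)) * x)) := by
      have h2 := (hslope.div_const (1 - G t)).neg
      have harg : -(Gd * x / (1 - G t)) = -(Gd / (1 - G t)) * x := by ring
      rw [harg] at h2
      apply h2.congr
      intro n
      simp only [hc]
      field_simp [hc]
      ring
    have hcpos : ∀ᶠ n : ℕ in atTop, 0 < c n := by
      filter_upwards [hgt_u] with n hn
      have hu0 : (0:ℝ) ≤ t + x / n := by linarith
      have : G (t + x / n) < 1 := by
        have h1 : G (t + x / n) < G (t + x / n + 1) :=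
          hG_strict (Set.mem_Ici.mpr hu0) (Set.mem_Ici.mpr (by linarith)) (by linarith)
        exact lt_of_lt_of_le h1 (hG_le1 _)
      exact div_pos (by linarith) h1Gt
    have hcne : ∀ᶠ n : ℕ in atTop, c n ≠ 1 := by
      filter_upwards [hgt_u] with n hn
      have : G t < G (t + x / n) := hG_strict (Set.mem_Ici.mpr (le_of_lt ht)) (Set.mem_Ici.mpr (by linarith)) hn
      have hlt : c n < 1 := (div_lt_one h1Gt).mpr (by linarith)
      exact ne_of_lt hlt
    have hpow := aux_pow_exp c _ hcpos hcne hmul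
    have hfin := (hpow.const_mul (1 - β)).const_sub 1
    apply hfin.congr'
    filter_upwards [eventually_ge_atTop 1, hgt_u] with n hn hu
    rw [hset x n hn, hZ_gt n hn (t + x / n) hu]
end

section
/- Under the stated assumptions on F, G, t, β and {Z_n}, the sequence {Z_n − t : n ≥ 1} satisfies the large deviation principle with speed n and rate function I_LD defined by I_LD(x) = ∞ for x ∈ (−∞,−t], I_LD(x) = −log( F(x+t)/F(t) ) for x ∈ (−t,0], and I_LD(x) = −log( (1−G(x+t))/(1−G(t)) ) for x ∈ (0,∞). -/
open Filter MeasureTheory ProbabilityTheory Topology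
open scoped ENNReal

namespace Stmt18Aux

noncomputable def rateI (F G : ℝ → ℝ) (t : ℝ) (x : ℝ) : EReal :=
  if x ≤ -t then (⊤ : EReal)
  else if x ≤ 0 then ((-Real.log (F (x + t) / F t) : ℝ) : EReal)
  else ((-Real.log ((1 - G (x + t)) / (1 - G t)) : ℝ) : EReal)

noncomputable def Phi (F G : ℝ → ℝ) (t β : ℝ) (n : ℕ) (x : ℝ) : ℝ :=
  if x ≤ t then β * (F x / F t) ^ n else 1 - (1 - β) * ((1 - G x) / (1 - G t)) ^ n

lemma Phi_continuous {F G : ℝ → ℝ} (hF : Continuous F) (hG : Continuous G) {t β : ℝ}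
    (hFt : F t ≠ 0) (hGt : (1:ℝ) - G t ≠ 0) (n : ℕ) : Continuous (Phi F G t β n) := by
  unfold Phi
  refine Continuous.if_le ?_ ?_ continuous_id continuous_const ?_
  · exact continuous_const.mul ((hF.div_const _).pow n)
  · exact continuous_const.sub
      (continuous_const.mul (((continuous_const.sub hG).div_const _).pow n))
  · intro x hx
    rw [hx, div_self hFt, div_self hGt]
    simp only [one_pow]
    ring

lemma term_le {p : ℝ≥0∞} (hp : p ≠ ∞) {K r : ℝ} (hK : 0 < K) (hr : 0 < r)
    {n : ℕ} (hn : 1 ≤ n) (h : p.toReal ≤ K * r ^ n) :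
    (((n : ℝ)⁻¹ : ℝ) : EReal) * ENNReal.log p
      ≤ (((n : ℝ)⁻¹ * Real.log K + Real.log r : ℝ) : EReal) := by
  have hn0 : (0:ℝ) < (n:ℝ) := by exact_mod_cast hn
  have hrn : 0 < K * r ^ n := by positivity
  have hple : p ≤ ENNReal.ofReal (K * r ^ n) :=
    (ENNReal.le_ofReal_iff_toReal_le hp hrn.le).2 h
  have hlog : ENNReal.log p ≤ ((Real.log (K * r ^ n) : ℝ) : EReal) := by
    rw [← ENNReal.log_ofReal_of_pos hrn]
    exact ENNReal.log_monotone hple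
  have hnn : (0:EReal) ≤ (((n:ℝ)⁻¹ : ℝ) : EReal) := by
    rw [← EReal.coe_zero, EReal.coe_le_coe_iff]; positivity
  calc (((n : ℝ)⁻¹ : ℝ) : EReal) * ENNReal.log p
      ≤ (((n : ℝ)⁻¹ : ℝ) : EReal) * ((Real.log (K * r ^ n) : ℝ) : EReal) :=
        mul_le_mul_of_nonneg_left hlog hnn
    _ = (((n : ℝ)⁻¹ * Real.log (K * r ^ n) : ℝ) : EReal) := by rw [← EReal.coe_mul]
    _ = (((n : ℝ)⁻¹ * Real.log K + Real.log r : ℝ) : EReal) := by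
        rw [Real.log_mul hK.ne' (pow_pos hr n).ne', Real.log_pow]
        congr 1
        field_simp

lemma tendsto_aux (K r : ℝ) :
    Tendsto (fun n : ℕ => (((n : ℝ)⁻¹ * Real.log K + Real.log r : ℝ) : EReal)) atTop
      (nhds ((Real.log r : ℝ) : EReal)) := by
  have h : Tendsto (fun n : ℕ => (n : ℝ)⁻¹ * Real.log K + Real.log r) atTop
      (nhds (Real.log r)) := by
    have := (tendsto_inv_atTop_nhds_zero_nat (𝕜 := ℝ)).mul_const (Real.log K)
    simpa using this.add_const (Real.log r)
  exact (continuous_coe_real_ereal.tendsto _).comp h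

lemma limsup_le {p : ℕ → ℝ≥0∞} (hp : ∀ n, p n ≠ ∞) {K r : ℝ} (hK : 0 < K)
    (hr : 0 < r) (h : ∀ n, 1 ≤ n → (p n).toReal ≤ K * r ^ n) :
    limsup (fun n : ℕ => (((n : ℝ)⁻¹ : ℝ) : EReal) * ENNReal.log (p n)) atTop
      ≤ ((Real.log r : ℝ) : EReal) := by
  have hle : ∀ᶠ n : ℕ in atTop, (((n : ℝ)⁻¹ : ℝ) : EReal) * ENNReal.log (p n)
      ≤ (((n : ℝ)⁻¹ * Real.log K + Real.log r : ℝ) : EReal) := by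
    filter_upwards [eventually_ge_atTop 1] with n hn
    exact term_le (hp n) hK hr hn (h n hn)
  calc limsup (fun n : ℕ => (((n : ℝ)⁻¹ : ℝ) : EReal) * ENNReal.log (p n)) atTop
      ≤ limsup (fun n : ℕ => (((n : ℝ)⁻¹ * Real.log K + Real.log r : ℝ) : EReal)) atTop :=
        limsup_le_limsup hle
    _ = ((Real.log r : ℝ) : EReal) := (tendsto_aux K r).limsup_eq

lemma limsup_bot {p : ℕ → ℝ≥0∞} (h : ∀ n, 1 ≤ n → p n = 0) :
    limsup (fun n : ℕ => (((n : ℝ)⁻¹ : ℝ) : EReal) * ENNReal.log (p n)) atTop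
      ≤ (⊥ : EReal) := by
  refine limsup_le_of_le (by isBoundedDefault) ?_
  filter_upwards [eventually_ge_atTop 1] with n hn
  have hn0 : (0:ℝ) < (n:ℝ)⁻¹ := by
    have : (0:ℝ) < (n:ℝ) := by exact_mod_cast hn
    positivity
  rw [h n hn, ENNReal.log_zero, EReal.coe_mul_bot_of_pos hn0]

lemma le_liminf {p : ℕ → ℝ≥0∞} (hp : ∀ n, p n ≠ ∞) {K r : ℝ} (hK : 0 < K) (hr : 0 < r)
    (h : ∀ᶠ n : ℕ in atTop, K * r ^ n ≤ (p n).toReal) :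
    ((Real.log r : ℝ) : EReal)
      ≤ liminf (fun n : ℕ => (((n : ℝ)⁻¹ : ℝ) : EReal) * ENNReal.log (p n)) atTop := by
  have hle : ∀ᶠ n : ℕ in atTop, (((n : ℝ)⁻¹ * Real.log K + Real.log r : ℝ) : EReal)
      ≤ (((n : ℝ)⁻¹ : ℝ) : EReal) * ENNReal.log (p n) := by
    filter_upwards [h, eventually_ge_atTop 1] with n hbd hn
    have hn0 : (0:ℝ) < (n:ℝ) := by exact_mod_cast hn
    have hrn : 0 < K * r ^ n := by positivity
    have hple : ENNReal.ofReal (K * r ^ n) ≤ p n := ENNReal.ofReal_le_of_le_toReal hbd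
    have hlog : ((Real.log (K * r ^ n) : ℝ) : EReal) ≤ ENNReal.log (p n) := by
      rw [← ENNReal.log_ofReal_of_pos hrn]
      exact ENNReal.log_monotone hple
    have hnn : (0:EReal) ≤ (((n:ℝ)⁻¹ : ℝ) : EReal) := by
      rw [← EReal.coe_zero, EReal.coe_le_coe_iff]; positivity
    calc (((n : ℝ)⁻¹ * Real.log K + Real.log r : ℝ) : EReal)
        = (((n : ℝ)⁻¹ * Real.log (K * r ^ n) : ℝ) : EReal) := by
          rw [Real.log_mul hK.ne' (pow_pos hr n).ne', Real.log_pow]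
          congr 1
          field_simp
      _ = (((n : ℝ)⁻¹ : ℝ) : EReal) * ((Real.log (K * r ^ n) : ℝ) : EReal) := EReal.coe_mul _ _
      _ ≤ (((n : ℝ)⁻¹ : ℝ) : EReal) * ENNReal.log (p n) :=
          mul_le_mul_of_nonneg_left hlog hnn
  calc ((Real.log r : ℝ) : EReal)
      = liminf (fun n : ℕ => (((n : ℝ)⁻¹ * Real.log K + Real.log r : ℝ) : EReal)) atTop :=
        ((tendsto_aux K r).liminf_eq).symm
    _ ≤ liminf (fun n : ℕ => (((n : ℝ)⁻¹ : ℝ) : EReal) * ENNReal.log (p n)) atTop :=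
        liminf_le_liminf hle


end Stmt18Aux
/-- Proposition 6.3: `{Z_n - t}` satisfies the LDP with speed `n` and rate function
`I_LD(x) = ∞` for `x ≤ -t`, `I_LD(x) = -log(F(x+t)/F(t))` for `x ∈ (-t, 0]`, and
`I_LD(x) = -log((1-G(x+t))/(1-G(t)))` for `x > 0`. -/
theorem stmt_18
    {Ω : Type*} [MeasureSpace Ω] [IsProbabilityMeasure (ℙ : Measure Ω)]
    (F G : ℝ → ℝ) (hF_cont : Continuous F) (hG_cont : Continuous G)
    (hF_mono : Monotone F) (hG_mono : Monotone G)
    (hF0 : F 0 = 0) (hG0 : G 0 = 0)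
    (hF_strict : StrictMonoOn F (Set.Ici 0)) (hG_strict : StrictMonoOn G (Set.Ici 0))
    (hF_bot : Tendsto F atBot (nhds 0)) (hF_top : Tendsto F atTop (nhds 1))
    (hG_bot : Tendsto G atBot (nhds 0)) (hG_top : Tendsto G atTop (nhds 1))
    (t : ℝ) (ht : 0 < t) (β : ℝ) (hβ : 0 < β) (hβ1 : β < 1)
    (Z : ℕ → Ω → ℝ) (hZ : ∀ n, Measurable (Z n))
    (hZ_le : ∀ n : ℕ, 1 ≤ n → ∀ x : ℝ, 0 ≤ x → x ≤ t →
      (ℙ {ω | Z n ω ≤ x}).toReal = β * (F x / F t) ^ n)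
    (hZ_gt : ∀ n : ℕ, 1 ≤ n → ∀ x : ℝ, t < x →
      (ℙ {ω | Z n ω ≤ x}).toReal = 1 - (1 - β) * ((1 - G x) / (1 - G t)) ^ n) :
    (∀ C : Set ℝ, IsClosed C →
      limsup (fun n : ℕ => (((n : ℝ)⁻¹ : ℝ) : EReal) *
          ENNReal.log (ℙ {ω | Z n ω - t ∈ C})) atTop
        ≤ -(⨅ x ∈ C, if x ≤ -t then (⊤ : EReal)
            else if x ≤ 0 then ((-Real.log (F (x + t) / F t) : ℝ) : EReal)
            else ((-Real.log ((1 - G (x + t)) / (1 - G t)) : ℝ) : EReal))) ∧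
    (∀ O : Set ℝ, IsOpen O →
      -(⨅ x ∈ O, if x ≤ -t then (⊤ : EReal)
            else if x ≤ 0 then ((-Real.log (F (x + t) / F t) : ℝ) : EReal)
            else ((-Real.log ((1 - G (x + t)) / (1 - G t)) : ℝ) : EReal))
        ≤ liminf (fun n : ℕ => (((n : ℝ)⁻¹ : ℝ) : EReal) *
          ENNReal.log (ℙ {ω | Z n ω - t ∈ O})) atTop) := by
  classical
  -- ## Basic facts about F and G
  have hFt : 0 < F t := by
    have := hF_strict Set.self_mem_Ici (Set.mem_Ici.mpr ht.le) ht
    rwa [hF0] at this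
  have hG_le1 : ∀ x, G x ≤ 1 := fun x =>
    ge_of_tendsto hG_top ((eventually_ge_atTop x).mono fun y hy => hG_mono hy)
  have hF_nonneg : ∀ x, 0 ≤ F x := fun x =>
    le_of_tendsto hF_bot ((eventually_le_atBot x).mono fun y hy => hF_mono hy)
  have hF_zero : ∀ x, x ≤ 0 → F x = 0 := fun x hx =>
    le_antisymm (hF0 ▸ hF_mono hx) (hF_nonneg x)
  have hG_lt1 : ∀ x, G x < 1 := by
    intro x
    rcases lt_or_ge x 0 with hx | hx
    · have h1 : G x ≤ 0 := hG0 ▸ hG_mono hx.le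
      linarith
    · exact lt_of_lt_of_le
        (hG_strict (Set.mem_Ici.mpr hx) (Set.mem_Ici.mpr (by linarith)) (lt_add_one x))
        (hG_le1 (x + 1))
  have hGt : 0 < 1 - G t := by linarith [hG_lt1 t]
  have hFpos : ∀ y : ℝ, 0 < y → 0 < F y := fun y hy => by
    have := hF_strict Set.self_mem_Ici (Set.mem_Ici.mpr hy.le) hy
    rwa [hF0] at this
  -- ## CDF facts
  have hmeas : ∀ (n : ℕ) (c : ℝ), MeasurableSet {ω | Z n ω ≤ c} := fun n c =>
    measurableSet_le (hZ n) measurable_const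
  have cdf0 : ∀ n, 1 ≤ n → ∀ x : ℝ, x ≤ 0 → ℙ {ω | Z n ω ≤ x} = 0 := by
    intro n hn x hx
    have h0 : (ℙ {ω | Z n ω ≤ 0}).toReal = 0 := by
      rw [hZ_le n hn 0 le_rfl ht.le, hF0, zero_div, zero_pow (show n ≠ 0 by omega), mul_zero]
    have h0' : ℙ {ω | Z n ω ≤ 0} = 0 := by
      rcases (ENNReal.toReal_eq_zero_iff _).mp h0 with h | h
      · exact h
      · exact absurd h (measure_ne_top _ _)
    refine le_antisymm ?_ (zero_le)
    calc ℙ {ω | Z n ω ≤ x} ≤ ℙ {ω | Z n ω ≤ 0} :=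
          measure_mono fun ω hω => le_trans hω hx
      _ = 0 := h0'
  have cdf_eq : ∀ n, 1 ≤ n → ∀ x : ℝ,
      (ℙ {ω | Z n ω ≤ x}).toReal = Stmt18Aux.Phi F G t β n x := by
    intro n hn x
    rcases le_or_gt x t with hxt | hxt
    · rw [Stmt18Aux.Phi, if_pos hxt]
      rcases le_or_gt 0 x with hx0 | hx0
      · exact hZ_le n hn x hx0 hxt
      · rw [cdf0 n hn x hx0.le, hF_zero x hx0.le, zero_div,
          zero_pow (show n ≠ 0 by omega), mul_zero, ENNReal.toReal_zero]
    · rw [Stmt18Aux.Phi, if_neg hxt.not_ge]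
      exact hZ_gt n hn x hxt
  have hIic : ∀ (n : ℕ) (x : ℝ),
      {ω | Z n ω - t ∈ Set.Iic x} = {ω | Z n ω ≤ x + t} := by
    intro n x
    ext ω
    simp only [Set.mem_setOf_eq, Set.mem_Iic]
    constructor <;> intro h <;> linarith
  have hIoc : ∀ (n : ℕ) (u v : ℝ), u ≤ v →
      (ℙ {ω | Z n ω - t ∈ Set.Ioc u v}).toReal
        = (ℙ {ω | Z n ω ≤ v + t}).toReal - (ℙ {ω | Z n ω ≤ u + t}).toReal := by
    intro n u v huv
    have hset : {ω | Z n ω - t ∈ Set.Ioc u v}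
        = {ω | Z n ω ≤ v + t} \ {ω | Z n ω ≤ u + t} := by
      ext ω
      simp only [Set.mem_setOf_eq, Set.mem_Ioc, Set.mem_diff, not_le]
      constructor
      · rintro ⟨h1, h2⟩; exact ⟨by linarith, by linarith⟩
      · rintro ⟨h1, h2⟩; exact ⟨by linarith, by linarith⟩
    have hsub : {ω | Z n ω ≤ u + t} ⊆ {ω | Z n ω ≤ v + t} := by
      intro ω hω
      simp only [Set.mem_setOf_eq] at *
      linarith
    rw [hset, measure_diff hsub ((hmeas n (u + t)).nullMeasurableSet) (measure_ne_top _ _),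
      ENNReal.toReal_sub_of_le (measure_mono hsub) (measure_ne_top _ _)]
  have hatom : ∀ n, 1 ≤ n → ∀ c : ℝ, ℙ {ω | Z n ω = c} = 0 := by
    intro n hn c
    have key : ∀ y : ℝ, y < c → (ℙ {ω | Z n ω = c}).toReal
        ≤ Stmt18Aux.Phi F G t β n c - Stmt18Aux.Phi F G t β n y := by
      intro y hy
      have hsub : {ω | Z n ω = c} ⊆ {ω | Z n ω ≤ c} \ {ω | Z n ω ≤ y} := by
        intro ω hω
        simp only [Set.mem_setOf_eq] at hω
        simp only [Set.mem_diff, Set.mem_setOf_eq, not_le, hω]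
        exact ⟨le_rfl, hy⟩
      have hsub2 : {ω | Z n ω ≤ y} ⊆ {ω | Z n ω ≤ c} := by
        intro ω hω
        simp only [Set.mem_setOf_eq] at *
        linarith
      calc (ℙ {ω | Z n ω = c}).toReal
          ≤ (ℙ ({ω | Z n ω ≤ c} \ {ω | Z n ω ≤ y})).toReal :=
            ENNReal.toReal_mono (measure_ne_top _ _) (measure_mono hsub)
        _ = Stmt18Aux.Phi F G t β n c - Stmt18Aux.Phi F G t β n y := by
            rw [measure_diff hsub2 ((hmeas n y).nullMeasurableSet) (measure_ne_top _ _),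
              ENNReal.toReal_sub_of_le (measure_mono hsub2) (measure_ne_top _ _),
              cdf_eq n hn c, cdf_eq n hn y]
    have hcont : Continuous (Stmt18Aux.Phi F G t β n) :=
      Stmt18Aux.Phi_continuous hF_cont hG_cont hFt.ne' hGt.ne' n
    have hseq : Tendsto (fun k : ℕ => c - ((k : ℝ) + 1)⁻¹) atTop (nhds c) := by
      have h1 := tendsto_one_div_add_atTop_nhds_zero_nat (𝕜 := ℝ)
      simp only [one_div] at h1
      simpa using tendsto_const_nhds.sub h1
    have hlim : Tendsto (fun k : ℕ =>
        Stmt18Aux.Phi F G t β n c - Stmt18Aux.Phi F G t β n (c - ((k : ℝ) + 1)⁻¹)) atTop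
        (nhds 0) := by
      have h2 : Tendsto (fun k : ℕ => Stmt18Aux.Phi F G t β n (c - ((k : ℝ) + 1)⁻¹)) atTop
          (nhds (Stmt18Aux.Phi F G t β n c)) := (hcont.tendsto c).comp hseq
      have h3 : Tendsto (fun _ : ℕ => Stmt18Aux.Phi F G t β n c) atTop
          (nhds (Stmt18Aux.Phi F G t β n c)) := tendsto_const_nhds
      have h4 := h3.sub h2
      simpa using h4
    have h0 : (ℙ {ω | Z n ω = c}).toReal ≤ 0 := by
      refine ge_of_tendsto hlim (Eventually.of_forall fun k => ?_)
      refine key _ ?_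
      have : (0:ℝ) < ((k : ℝ) + 1)⁻¹ := by positivity
      linarith
    have h0' := le_antisymm h0 ENNReal.toReal_nonneg
    rcases (ENNReal.toReal_eq_zero_iff _).mp h0' with h | h
    · exact h
    · exact absurd h (measure_ne_top _ _)
  have hIci : ∀ n, 1 ≤ n → ∀ x : ℝ, (ℙ {ω | Z n ω - t ∈ Set.Ici x}).toReal
      = 1 - (ℙ {ω | Z n ω ≤ x + t}).toReal := by
    intro n hn x
    have hset : {ω | Z n ω - t ∈ Set.Ici x}
        = {ω | Z n ω ≤ x + t}ᶜ ∪ {ω | Z n ω = x + t} := by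
      ext ω
      simp only [Set.mem_setOf_eq, Set.mem_Ici, Set.mem_union, Set.mem_compl_iff, not_le]
      constructor
      · intro h
        rcases eq_or_lt_of_le h with h' | h'
        · right; linarith
        · left; linarith
      · rintro (h | h) <;> linarith
    have hun : ℙ ({ω | Z n ω ≤ x + t}ᶜ ∪ {ω | Z n ω = x + t}) = ℙ {ω | Z n ω ≤ x + t}ᶜ := by
      refine le_antisymm ?_ (measure_mono Set.subset_union_left)
      calc ℙ ({ω | Z n ω ≤ x + t}ᶜ ∪ {ω | Z n ω = x + t})
          ≤ ℙ {ω | Z n ω ≤ x + t}ᶜ + ℙ {ω | Z n ω = x + t} := measure_union_le _ _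
        _ = ℙ {ω | Z n ω ≤ x + t}ᶜ := by rw [hatom n hn (x + t), add_zero]
    rw [hset, hun, measure_compl (hmeas n (x + t)) (measure_ne_top _ _), measure_univ,
      ENNReal.toReal_sub_of_le prob_le_one ENNReal.one_ne_top, ENNReal.toReal_one]
  have hmzero : ∀ (s : Set Ω), (ℙ s).toReal ≤ 0 → ℙ s = 0 := by
    intro s hs
    have h0 := le_antisymm hs ENNReal.toReal_nonneg
    rcases (ENNReal.toReal_eq_zero_iff _).mp h0 with h | h
    · exact h
    · exact absurd h (measure_ne_top _ _)
  constructor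
  · -- ## Upper bound for closed sets
    intro C hC
    rw [show (⨅ x ∈ C, if x ≤ -t then (⊤ : EReal)
        else if x ≤ 0 then ((-Real.log (F (x + t) / F t) : ℝ) : EReal)
        else ((-Real.log ((1 - G (x + t)) / (1 - G t)) : ℝ) : EReal))
      = ⨅ x ∈ C, Stmt18Aux.rateI F G t x from rfl]
    -- empty-set bound helper
    have hempty : ∀ n : ℕ, n ≠ 0 →
        (ℙ {ω | Z n ω - t ∈ (∅ : Set ℝ)}).toReal ≤ 1 * (0:ℝ) ^ n := by
      intro n hn
      have he : {ω | Z n ω - t ∈ (∅ : Set ℝ)} = (∅ : Set Ω) := by ext ω; simp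
      rw [he, measure_empty, ENNReal.toReal_zero, zero_pow hn, mul_zero]
    -- ### Piece 1 : subsets of Iic 0
    have piece1 : ∀ D : Set ℝ, IsClosed D → D ⊆ Set.Iic 0 →
        ∃ K r : ℝ, 0 < K ∧ 0 ≤ r ∧
          (∀ n, 1 ≤ n → (ℙ {ω | Z n ω - t ∈ D}).toReal ≤ K * r ^ n) ∧
          (0 < r → ((Real.log r : ℝ) : EReal) ≤ -(⨅ x ∈ D, Stmt18Aux.rateI F G t x)) := by
      intro D hDc hD0
      rcases D.eq_empty_or_nonempty with rfl | hne
      · exact ⟨1, 0, one_pos, le_rfl, fun n hn => hempty n (by omega),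
          fun h => absurd h (lt_irrefl 0)⟩
      have hbdd : BddAbove D := ⟨0, fun x hx => hD0 hx⟩
      obtain ⟨s, hsD, hDs⟩ : ∃ s, s ∈ D ∧ D ⊆ Set.Iic s :=
        ⟨sSup D, hDc.csSup_mem hne hbdd, fun x hx => le_csSup hbdd hx⟩
      have hs0 : s ≤ 0 := hD0 hsD
      rcases le_or_gt s (-t) with hst | hst
      · refine ⟨1, 0, one_pos, le_rfl, ?_, fun h => absurd h (lt_irrefl 0)⟩
        intro n hn
        rw [zero_pow (show n ≠ 0 by omega), mul_zero]
        have hsub : {ω | Z n ω - t ∈ D} ⊆ {ω | Z n ω ≤ 0} := by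
          intro ω hω
          simp only [Set.mem_setOf_eq] at *
          have h1 := hDs hω
          simp only [Set.mem_Iic] at h1
          linarith
        have hle0 : ℙ {ω | Z n ω - t ∈ D} ≤ ℙ {ω | Z n ω ≤ 0} := measure_mono hsub
        rw [cdf0 n hn 0 le_rfl, le_zero_iff] at hle0
        rw [hle0, ENNReal.toReal_zero]
      · refine ⟨β, F (s + t) / F t, hβ, div_nonneg (hF_nonneg _) hFt.le, ?_, ?_⟩
        · intro n hn
          have hsub : {ω | Z n ω - t ∈ D} ⊆ {ω | Z n ω - t ∈ Set.Iic s} :=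
            fun ω hω => hDs hω
          have h1 : (ℙ {ω | Z n ω - t ∈ D}).toReal
              ≤ (ℙ {ω | Z n ω - t ∈ Set.Iic s}).toReal :=
            ENNReal.toReal_mono (measure_ne_top _ _) (measure_mono hsub)
          rw [hIic n s, cdf_eq n hn (s + t), Stmt18Aux.Phi,
            if_pos (show s + t ≤ t by linarith)] at h1
          exact h1
        · intro _
          have hmem : (⨅ x ∈ D, Stmt18Aux.rateI F G t x) ≤ Stmt18Aux.rateI F G t s :=
            iInf₂_le s hsD
          have hIr : Stmt18Aux.rateI F G t s
              = ((-Real.log (F (s + t) / F t) : ℝ) : EReal) := by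
            rw [Stmt18Aux.rateI, if_neg (by linarith), if_pos hs0]
          calc ((Real.log (F (s + t) / F t) : ℝ) : EReal)
              = -((-Real.log (F (s + t) / F t) : ℝ) : EReal) := by
                rw [← EReal.coe_neg, neg_neg]
            _ ≤ -(⨅ x ∈ D, Stmt18Aux.rateI F G t x) :=
                EReal.neg_le_neg_iff.mpr (hIr ▸ hmem)
    -- ### Piece 2 : subsets of Ici 0
    have piece2 : ∀ D : Set ℝ, IsClosed D → D ⊆ Set.Ici 0 →
        ∃ K r : ℝ, 0 < K ∧ 0 ≤ r ∧
          (∀ n, 1 ≤ n → (ℙ {ω | Z n ω - t ∈ D}).toReal ≤ K * r ^ n) ∧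
          (0 < r → ((Real.log r : ℝ) : EReal) ≤ -(⨅ x ∈ D, Stmt18Aux.rateI F G t x)) := by
      intro D hDc hD0
      rcases D.eq_empty_or_nonempty with rfl | hne
      · exact ⟨1, 0, one_pos, le_rfl, fun n hn => hempty n (by omega),
          fun h => absurd h (lt_irrefl 0)⟩
      have hbdd : BddBelow D := ⟨0, fun x hx => hD0 hx⟩
      obtain ⟨s, hsD, hDs⟩ : ∃ s, s ∈ D ∧ D ⊆ Set.Ici s :=
        ⟨sInf D, hDc.csInf_mem hne hbdd, fun x hx => csInf_le hbdd hx⟩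
      have hs0 : 0 ≤ s := hD0 hsD
      have hG1 : 0 < 1 - G (s + t) := by linarith [hG_lt1 (s + t)]
      refine ⟨1, (1 - G (s + t)) / (1 - G t), one_pos,
        le_of_lt (div_pos hG1 hGt), ?_, ?_⟩
      · intro n hn
        have h1 : (ℙ {ω | Z n ω - t ∈ D}).toReal
            ≤ (ℙ {ω | Z n ω - t ∈ Set.Ici s}).toReal :=
          ENNReal.toReal_mono (measure_ne_top _ _) (measure_mono fun ω hω => hDs hω)
        rw [hIci n hn s, cdf_eq n hn (s + t)] at h1
        rcases eq_or_lt_of_le hs0 with hseq | hspos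
        · have hr1 : (1 - G (s + t)) / (1 - G t) = 1 := by
            rw [← hseq, zero_add]
            exact div_self hGt.ne'
          rw [hr1, one_pow, mul_one]
          calc (ℙ {ω | Z n ω - t ∈ D}).toReal
              ≤ (1 : ℝ≥0∞).toReal := ENNReal.toReal_mono ENNReal.one_ne_top prob_le_one
            _ = 1 := ENNReal.toReal_one
        · rw [Stmt18Aux.Phi, if_neg (show ¬ (s + t ≤ t) by push_neg; linarith)] at h1
          have hpow : (0:ℝ) ≤ ((1 - G (s + t)) / (1 - G t)) ^ n := by positivity
          calc (ℙ {ω | Z n ω - t ∈ D}).toReal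
              ≤ 1 - (1 - (1 - β) * ((1 - G (s + t)) / (1 - G t)) ^ n) := h1
            _ = (1 - β) * ((1 - G (s + t)) / (1 - G t)) ^ n := by ring
            _ ≤ 1 * ((1 - G (s + t)) / (1 - G t)) ^ n :=
                mul_le_mul_of_nonneg_right (by linarith) hpow
      · intro _
        have hmem : (⨅ x ∈ D, Stmt18Aux.rateI F G t x) ≤ Stmt18Aux.rateI F G t s :=
          iInf₂_le s hsD
        have hIr : Stmt18Aux.rateI F G t s
            = ((-Real.log ((1 - G (s + t)) / (1 - G t)) : ℝ) : EReal) := by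
          rcases eq_or_lt_of_le hs0 with hseq | hspos
          · rw [Stmt18Aux.rateI, if_neg (by linarith), if_pos (le_of_eq hseq.symm), ← hseq,
              zero_add, div_self hFt.ne', div_self hGt.ne', Real.log_one]
          · rw [Stmt18Aux.rateI, if_neg (by linarith), if_neg (by push_neg; linarith)]
        calc ((Real.log ((1 - G (s + t)) / (1 - G t)) : ℝ) : EReal)
            = -((-Real.log ((1 - G (s + t)) / (1 - G t)) : ℝ) : EReal) := by
              rw [← EReal.coe_neg, neg_neg]
          _ ≤ -(⨅ x ∈ D, Stmt18Aux.rateI F G t x) :=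
              EReal.neg_le_neg_iff.mpr (hIr ▸ hmem)
    -- ### Combine the two pieces
    obtain ⟨K1, r1, hK1, hr1, hb1, hl1⟩ :=
      piece1 (C ∩ Set.Iic 0) (hC.inter isClosed_Iic) Set.inter_subset_right
    obtain ⟨K2, r2, hK2, hr2, hb2, hl2⟩ :=
      piece2 (C ∩ Set.Ici 0) (hC.inter isClosed_Ici) Set.inter_subset_right
    have hcover : ∀ n : ℕ, (ℙ {ω | Z n ω - t ∈ C}).toReal
        ≤ (ℙ {ω | Z n ω - t ∈ C ∩ Set.Iic 0}).toReal
          + (ℙ {ω | Z n ω - t ∈ C ∩ Set.Ici 0}).toReal := by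
      intro n
      have hsub : {ω | Z n ω - t ∈ C} ⊆
          {ω | Z n ω - t ∈ C ∩ Set.Iic 0} ∪ {ω | Z n ω - t ∈ C ∩ Set.Ici 0} := by
        intro ω hω
        rcases le_total (Z n ω - t) 0 with h | h
        · exact Or.inl ⟨hω, h⟩
        · exact Or.inr ⟨hω, h⟩
      calc (ℙ {ω | Z n ω - t ∈ C}).toReal
          ≤ (ℙ {ω | Z n ω - t ∈ C ∩ Set.Iic 0}
              + ℙ {ω | Z n ω - t ∈ C ∩ Set.Ici 0}).toReal :=
            ENNReal.toReal_mono
              (ENNReal.add_ne_top.mpr ⟨measure_ne_top _ _, measure_ne_top _ _⟩)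
              (le_trans (measure_mono hsub) (measure_union_le _ _))
        _ = _ := ENNReal.toReal_add (measure_ne_top _ _) (measure_ne_top _ _)
    have hbound : ∀ n, 1 ≤ n → (ℙ {ω | Z n ω - t ∈ C}).toReal
        ≤ (K1 + K2) * (max r1 r2) ^ n := by
      intro n hn
      have h1 := hb1 n hn
      have h2 := hb2 n hn
      have e1 : r1 ^ n ≤ max r1 r2 ^ n := pow_le_pow_left₀ hr1 (le_max_left _ _) n
      have e2 : r2 ^ n ≤ max r1 r2 ^ n := pow_le_pow_left₀ hr2 (le_max_right _ _) n
      have f1 := mul_le_mul_of_nonneg_left e1 hK1.le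
      have f2 := mul_le_mul_of_nonneg_left e2 hK2.le
      have := hcover n
      nlinarith
    have hrm : (0:ℝ) ≤ max r1 r2 := le_trans hr1 (le_max_left _ _)
    rcases eq_or_lt_of_le hrm with hr0 | hrpos
    · refine le_trans (Stmt18Aux.limsup_bot ?_) bot_le
      intro n hn
      apply hmzero
      have := hbound n hn
      rwa [← hr0, zero_pow (show n ≠ 0 by omega), mul_zero] at this
    · refine le_trans (Stmt18Aux.limsup_le (fun n => measure_ne_top _ _)
        (by positivity) hrpos hbound) ?_
      rcases max_choice r1 r2 with hm | hm
      · rw [hm]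
        refine le_trans (hl1 (hm ▸ hrpos)) (EReal.neg_le_neg_iff.mpr ?_)
        exact biInf_mono fun x (hx : x ∈ C ∩ Set.Iic 0) => hx.1
      · rw [hm]
        refine le_trans (hl2 (hm ▸ hrpos)) (EReal.neg_le_neg_iff.mpr ?_)
        exact biInf_mono fun x (hx : x ∈ C ∩ Set.Ici 0) => hx.1
  · -- ## Lower bound for open sets
    intro O hO
    rw [show (⨅ x ∈ O, if x ≤ -t then (⊤ : EReal)
        else if x ≤ 0 then ((-Real.log (F (x + t) / F t) : ℝ) : EReal)
        else ((-Real.log ((1 - G (x + t)) / (1 - G t)) : ℝ) : EReal))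
      = ⨅ x ∈ O, Stmt18Aux.rateI F G t x from rfl]
    refine EReal.neg_le.mpr (le_iInf fun x => le_iInf fun hx => EReal.neg_le.mp ?_)
    rcases le_or_gt x (-t) with hxt | hxt
    · rw [Stmt18Aux.rateI, if_pos hxt]
      simp
    obtain ⟨δ, hδ, hball⟩ := Metric.isOpen_iff.mp hO x hx
    rw [Real.ball_eq_Ioo] at hball
    rcases le_or_gt x 0 with hx0 | hx0
    · -- case -t < x ≤ 0
      rw [Stmt18Aux.rateI, if_neg hxt.not_ge, if_pos hx0, ← EReal.coe_neg, neg_neg]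
      set u : ℝ := max (x - δ / 2) ((x - t) / 2) with hu
      have hux : u < x := max_lt (by linarith) (by linarith)
      have hut : -t < u := lt_of_lt_of_le (by linarith) (le_max_right _ _)
      have huδ : x - δ < u := lt_of_lt_of_le (by linarith) (le_max_left _ _)
      have hsubO : Set.Ioc u x ⊆ O := by
        intro y hy
        exact hball ⟨by cases hy with | intro h1 h2 => linarith,
          by cases hy with | intro h1 h2 => linarith⟩
      have haxpos : 0 < F (x + t) := hFpos _ (by linarith)
      have haupos : 0 ≤ F (u + t) := hF_nonneg _
      have hlt : F (u + t) < F (x + t) :=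
        hF_strict (Set.mem_Ici.mpr (by linarith)) (Set.mem_Ici.mpr (by linarith)) (by linarith)
      have hρ1 : F (u + t) / F (x + t) < 1 := (div_lt_one haxpos).2 hlt
      have hρ0 : 0 ≤ F (u + t) / F (x + t) := div_nonneg haupos haxpos.le
      have hev := (tendsto_pow_atTop_nhds_zero_of_lt_one hρ0 hρ1).eventually
        (gt_mem_nhds (show (0:ℝ) < 1 / 2 by norm_num))
      refine Stmt18Aux.le_liminf (fun n => measure_ne_top _ _)
        (show (0:ℝ) < β / 2 by linarith) (div_pos haxpos hFt) ?_
      filter_upwards [hev, eventually_ge_atTop 1] with n hev1 hn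
      have hform := hIoc n u x hux.le
      rw [cdf_eq n hn (x + t), cdf_eq n hn (u + t)] at hform
      simp only [Stmt18Aux.Phi] at hform
      rw [if_pos (show x + t ≤ t by linarith), if_pos (show u + t ≤ t by linarith)] at hform
      have hsub2 : (ℙ {ω | Z n ω - t ∈ Set.Ioc u x}).toReal
          ≤ (ℙ {ω | Z n ω - t ∈ O}).toReal :=
        ENNReal.toReal_mono (measure_ne_top _ _) (measure_mono fun ω hω => hsubO hω)
      rw [hform] at hsub2
      have heq : F (u + t) / F t = (F (u + t) / F (x + t)) * (F (x + t) / F t) := by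
        field_simp
      have hax' : (0:ℝ) ≤ (F (x + t) / F t) ^ n := by positivity
      have hmulbd : (F (u + t) / F t) ^ n ≤ 1 / 2 * (F (x + t) / F t) ^ n := by
        rw [heq, mul_pow]
        exact mul_le_mul_of_nonneg_right hev1.le hax'
      have := mul_le_mul_of_nonneg_left hmulbd hβ.le
      linarith
    · -- case 0 < x
      rw [Stmt18Aux.rateI, if_neg hxt.not_ge, if_neg hx0.not_ge, ← EReal.coe_neg, neg_neg]
      set v : ℝ := x + δ / 2 with hv
      have hxv : x < v := by
        rw [hv]; linarith
      have hsubO : Set.Ioc x v ⊆ O := by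
        intro y hy
        exact hball ⟨by cases hy with | intro h1 h2 => linarith,
          by cases hy with | intro h1 h2 => rw [hv] at h2; linarith⟩
      have hbx : 0 < 1 - G (x + t) := by linarith [hG_lt1 (x + t)]
      have hbv : 0 < 1 - G (v + t) := by linarith [hG_lt1 (v + t)]
      have hlt : G (x + t) < G (v + t) :=
        hG_strict (Set.mem_Ici.mpr (by linarith)) (Set.mem_Ici.mpr (by linarith)) (by linarith)
      have hρ1 : (1 - G (v + t)) / (1 - G (x + t)) < 1 := (div_lt_one hbx).2 (by linarith)
      have hρ0 : 0 ≤ (1 - G (v + t)) / (1 - G (x + t)) := div_nonneg hbv.le hbx.le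
      have hev := (tendsto_pow_atTop_nhds_zero_of_lt_one hρ0 hρ1).eventually
        (gt_mem_nhds (show (0:ℝ) < 1 / 2 by norm_num))
      refine Stmt18Aux.le_liminf (fun n => measure_ne_top _ _)
        (show (0:ℝ) < (1 - β) / 2 by linarith) (div_pos hbx hGt) ?_
      filter_upwards [hev, eventually_ge_atTop 1] with n hev1 hn
      have hform := hIoc n x v hxv.le
      rw [cdf_eq n hn (v + t), cdf_eq n hn (x + t)] at hform
      simp only [Stmt18Aux.Phi] at hform
      rw [if_neg (show ¬ (v + t ≤ t) by push_neg; linarith),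
        if_neg (show ¬ (x + t ≤ t) by push_neg; linarith)] at hform
      have hsub2 : (ℙ {ω | Z n ω - t ∈ Set.Ioc x v}).toReal
          ≤ (ℙ {ω | Z n ω - t ∈ O}).toReal :=
        ENNReal.toReal_mono (measure_ne_top _ _) (measure_mono fun ω hω => hsubO hω)
      rw [hform] at hsub2
      have heq : (1 - G (v + t)) / (1 - G t)
          = ((1 - G (v + t)) / (1 - G (x + t))) * ((1 - G (x + t)) / (1 - G t)) := by
        field_simp
      have hax' : (0:ℝ) ≤ ((1 - G (x + t)) / (1 - G t)) ^ n := by positivity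
      have hmulbd : ((1 - G (v + t)) / (1 - G t)) ^ n
          ≤ 1 / 2 * ((1 - G (x + t)) / (1 - G t)) ^ n := by
        rw [heq, mul_pow]
        exact mul_le_mul_of_nonneg_right hev1.le hax'
      have := mul_le_mul_of_nonneg_left hmulbd (show (0:ℝ) ≤ 1 - β by linarith)
      linarith
end

section
/- Under the stated assumptions on F, G, t, β and {Z_n}, and assuming the left derivative F′(t−) and the right derivative G′(t+) exist and are strictly positive, for every sequence of positive numbers {a_n} with a_n·log n → 0 and a_n·n → ∞, the sequence of random variables {a_n·n·(Z_n − t) : n ≥ 1} satisfies the large deviation principle with speed 1/a_n and rate function I_MD defined by I_MD(x) = −(F′(t−)/F(t))·x for x ≤ 0 and I_MD(x) = (G′(t+)/(1−G(t)))·x for x > 0. -/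
open Filter MeasureTheory ProbabilityTheory Topology
open scoped ENNReal

private lemma ereal_le_of_forall {x b : EReal} (h : ∀ z : ℝ, b < (z : EReal) → x ≤ (z : EReal)) :
    x ≤ b := by
  by_contra hb
  push_neg at hb
  obtain ⟨z, hbz, hzx⟩ := EReal.exists_between_coe_real hb
  exact absurd (h z hbz) (not_le.mpr hzx)

private lemma tendsto_atBot_of_mul {a u : ℕ → ℝ} (hapos : ∀ n, 0 < a n)
    (ha0 : Tendsto a atTop (nhds 0)) {L : ℝ} (hL : L < 0)
    (h : Tendsto (fun n => a n * u n) atTop (nhds L)) : Tendsto u atTop atBot := by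
  have hinv : Tendsto (fun n => (a n)⁻¹) atTop atTop :=
    Filter.Tendsto.inv_tendsto_nhdsGT_zero
      (tendsto_nhdsWithin_of_tendsto_nhds_of_eventually_within _ ha0
        (Eventually.of_forall fun n => hapos n))
  have h2 := Filter.Tendsto.neg_mul_atTop hL h hinv
  refine h2.congr fun n => ?_
  rw [mul_comm (a n) (u n), mul_assoc, mul_inv_cancel₀ (hapos n).ne', mul_one]

private lemma tendsto_mul_log_add {a p q : ℕ → ℝ} (hapos : ∀ n, 0 < a n)
    (ha0 : Tendsto a atTop (nhds 0)) {A B : ℝ}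
    (hp : Tendsto (fun n => a n * Real.log (p n)) atTop (nhds A))
    (hq : Tendsto (fun n => a n * Real.log (q n)) atTop (nhds B))
    (hppos : ∀ᶠ n in atTop, 0 < p n) (hqpos : ∀ᶠ n in atTop, 0 < q n) :
    Tendsto (fun n => a n * Real.log (p n + q n)) atTop (nhds (max A B)) := by
  have hg : Tendsto (fun n => max (a n * Real.log (p n)) (a n * Real.log (q n))) atTop
      (nhds (max A B)) := hp.max hq
  have hh : Tendsto (fun n => a n * Real.log 2 +
      max (a n * Real.log (p n)) (a n * Real.log (q n))) atTop (nhds (max A B)) := by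
    have h2 := (ha0.mul_const (Real.log 2)).add hg
    simpa using h2
  refine tendsto_of_tendsto_of_tendsto_of_le_of_le' hg hh ?_ ?_
  · filter_upwards [hppos, hqpos] with n hp0 hq0
    refine max_le ?_ ?_
    · exact mul_le_mul_of_nonneg_left (Real.log_le_log hp0 (by linarith)) (hapos n).le
    · exact mul_le_mul_of_nonneg_left (Real.log_le_log hq0 (by linarith)) (hapos n).le
  · filter_upwards [hppos, hqpos] with n hp0 hq0
    have hmaxpos : 0 < max (p n) (q n) := lt_max_of_lt_left hp0
    have h1 : Real.log (p n + q n) ≤ Real.log 2 + max (Real.log (p n)) (Real.log (q n)) := by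
      have h2 : p n + q n ≤ 2 * max (p n) (q n) := by
        rcases le_total (p n) (q n) with h | h
        · rw [max_eq_right h]; linarith
        · rw [max_eq_left h]; linarith
      calc Real.log (p n + q n) ≤ Real.log (2 * max (p n) (q n)) :=
            Real.log_le_log (by linarith) h2
        _ = Real.log 2 + Real.log (max (p n) (q n)) :=
            Real.log_mul two_ne_zero hmaxpos.ne'
        _ = Real.log 2 + max (Real.log (p n)) (Real.log (q n)) := by
            rcases le_total (p n) (q n) with h | h
            · rw [max_eq_right h, max_eq_right (Real.log_le_log hp0 h)]
            · rw [max_eq_left h, max_eq_left (Real.log_le_log hq0 h)]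
    calc a n * Real.log (p n + q n)
        ≤ a n * (Real.log 2 + max (Real.log (p n)) (Real.log (q n))) :=
          mul_le_mul_of_nonneg_left h1 (hapos n).le
      _ = a n * Real.log 2 + max (a n * Real.log (p n)) (a n * Real.log (q n)) := by
          rw [mul_add, mul_max_of_nonneg _ _ (hapos n).le]

private lemma tendsto_mul_log_sub {a p q : ℕ → ℝ} (hapos : ∀ n, 0 < a n)
    (ha0 : Tendsto a atTop (nhds 0)) {A B : ℝ} (hBA : B < A)
    (hp : Tendsto (fun n => a n * Real.log (p n)) atTop (nhds A))
    (hq : Tendsto (fun n => a n * Real.log (q n)) atTop (nhds B))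
    (hppos : ∀ᶠ n in atTop, 0 < p n) (hqpos : ∀ᶠ n in atTop, 0 < q n) :
    (∀ᶠ n in atTop, 0 < p n - q n) ∧
      Tendsto (fun n => a n * Real.log (p n - q n)) atTop (nhds A) := by
  have hd : Tendsto (fun n => a n * (Real.log (q n) - Real.log (p n))) atTop (nhds (B - A)) := by
    have h2 := hq.sub hp
    simpa [mul_sub] using h2
  have hbot : Tendsto (fun n => Real.log (q n) - Real.log (p n)) atTop atBot :=
    tendsto_atBot_of_mul hapos ha0 (by linarith) hd
  have hr : Tendsto (fun n => q n / p n) atTop (nhds 0) := by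
    have hexp : Tendsto (fun n => Real.exp (Real.log (q n) - Real.log (p n))) atTop (nhds 0) :=
      Real.tendsto_exp_atBot.comp hbot
    refine hexp.congr' ?_
    filter_upwards [hppos, hqpos] with n hp0 hq0
    rw [Real.exp_sub, Real.exp_log hq0, Real.exp_log hp0]
  have hr2 : ∀ᶠ n in atTop, q n / p n < 1/2 := hr.eventually (eventually_lt_nhds (by norm_num))
  have h1r : Tendsto (fun n => Real.log (1 - q n / p n)) atTop (nhds 0) := by
    have h2 : Tendsto (fun n => 1 - q n / p n) atTop (nhds 1) := by
      simpa using (tendsto_const_nhds.sub hr)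
    have hcont := (Real.continuousAt_log one_ne_zero).tendsto
    have h3 := hcont.comp h2
    simpa [Real.log_one, Function.comp_def] using h3
  have hposev : ∀ᶠ n in atTop, 0 < p n - q n := by
    filter_upwards [hppos, hqpos, hr2] with n hp0 hq0 h2
    have h3 : q n < p n := by
      rw [div_lt_iff₀ hp0] at h2; nlinarith
    linarith
  refine ⟨hposev, ?_⟩
  have hmain : Tendsto (fun n => a n * Real.log (p n) + a n * Real.log (1 - q n / p n))
      atTop (nhds A) := by
    have h2 := hp.add (ha0.mul h1r)
    simpa using h2
  refine hmain.congr' ?_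
  filter_upwards [hppos, hqpos, hr2] with n hp0 hq0 h2
  have h4 : 0 < 1 - q n / p n := by linarith
  have h5 : p n - q n = p n * (1 - q n / p n) := by field_simp
  rw [h5, Real.log_mul hp0.ne' h4.ne', mul_add]

private lemma ereal_liminf_ge {a : ℕ → ℝ} (hapos : ∀ n, 0 < a n) {P : ℕ → ℝ≥0∞}
    {w : ℕ → ℝ} {L : ℝ}
    (hle : ∀ᶠ n in atTop, w n ≤ (P n).toReal) (hPtop : ∀ n, P n ≠ ⊤)
    (hw : ∀ᶠ n in atTop, 0 < w n)
    (hL : Tendsto (fun n => a n * Real.log (w n)) atTop (nhds L)) :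
    (L : EReal) ≤ liminf (fun n => ((a n : ℝ) : EReal) * ENNReal.log (P n)) atTop := by
  have hev : ∀ᶠ n in atTop, ((a n * Real.log (w n) : ℝ) : EReal) ≤
      ((a n : ℝ) : EReal) * ENNReal.log (P n) := by
    filter_upwards [hle, hw] with n h1 h2
    have hpos : 0 < (P n).toReal := lt_of_lt_of_le h2 h1
    have h0 : P n ≠ 0 := by
      intro h
      rw [h] at hpos
      simp at hpos
    rw [ENNReal.log_pos_real h0 (hPtop n), ← EReal.coe_mul, EReal.coe_le_coe_iff]
    exact mul_le_mul_of_nonneg_left (Real.log_le_log h2 h1) (hapos n).le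
  calc (L : EReal) = liminf (fun n => ((a n * Real.log (w n) : ℝ) : EReal)) atTop :=
        ((EReal.tendsto_coe.mpr hL).liminf_eq).symm
    _ ≤ _ := liminf_le_liminf hev


set_option maxHeartbeats 2000000 in
/-- Proposition 6.4 (moderate deviations): for positive scalings `a_n` with
`a_n * log n → 0` and `a_n * n → ∞`, the sequence `a_n * n * (Z_n - t)` satisfies the
LDP with speed `1 / a_n` and rate function `I_MD(x) = -(F'(t-)/F(t)) x` for `x ≤ 0` and
`I_MD(x) = (G'(t+)/(1-G(t))) x` for `x > 0`. -/
theorem stmt_19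
    {Ω : Type*} [MeasureSpace Ω] [IsProbabilityMeasure (ℙ : Measure Ω)]
    (F G : ℝ → ℝ) (hF_cont : Continuous F) (hG_cont : Continuous G)
    (hF_mono : Monotone F) (hG_mono : Monotone G)
    (hF0 : F 0 = 0) (hG0 : G 0 = 0)
    (hF_strict : StrictMonoOn F (Set.Ici 0)) (hG_strict : StrictMonoOn G (Set.Ici 0))
    (hF_bot : Tendsto F atBot (nhds 0)) (hF_top : Tendsto F atTop (nhds 1))
    (hG_bot : Tendsto G atBot (nhds 0)) (hG_top : Tendsto G atTop (nhds 1))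
    (t : ℝ) (ht : 0 < t) (β : ℝ) (hβ : 0 < β) (hβ1 : β < 1)
    (Z : ℕ → Ω → ℝ) (hZ : ∀ n, Measurable (Z n))
    (hZ_le : ∀ n : ℕ, 1 ≤ n → ∀ x : ℝ, 0 ≤ x → x ≤ t →
      (ℙ {ω | Z n ω ≤ x}).toReal = β * (F x / F t) ^ n)
    (hZ_gt : ∀ n : ℕ, 1 ≤ n → ∀ x : ℝ, t < x →
      (ℙ {ω | Z n ω ≤ x}).toReal = 1 - (1 - β) * ((1 - G x) / (1 - G t)) ^ n)
    (Fd Gd : ℝ) (hFd_pos : 0 < Fd) (hGd_pos : 0 < Gd)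
    (hFd : HasDerivWithinAt F Fd (Set.Iio t) t)
    (hGd : HasDerivWithinAt G Gd (Set.Ioi t) t)
    (a : ℕ → ℝ) (ha_pos : ∀ n, 0 < a n)
    (ha_log : Tendsto (fun n : ℕ => a n * Real.log n) atTop (nhds 0))
    (ha_top : Tendsto (fun n : ℕ => a n * n) atTop atTop) :
    (∀ C : Set ℝ, IsClosed C →
      limsup (fun n : ℕ => ((a n : ℝ) : EReal) *
          ENNReal.log (ℙ {ω | a n * n * (Z n ω - t) ∈ C})) atTop
        ≤ -(⨅ x ∈ C, if x ≤ 0 then ((-(Fd / F t) * x : ℝ) : EReal)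
            else ((Gd / (1 - G t) * x : ℝ) : EReal))) ∧
    (∀ O : Set ℝ, IsOpen O →
      -(⨅ x ∈ O, if x ≤ 0 then ((-(Fd / F t) * x : ℝ) : EReal)
            else ((Gd / (1 - G t) * x : ℝ) : EReal))
        ≤ liminf (fun n : ℕ => ((a n : ℝ) : EReal) *
          ENNReal.log (ℙ {ω | a n * n * (Z n ω - t) ∈ O})) atTop) := by
  -- basic facts
  have hFt : 0 < F t := by
    have h := hF_strict Set.self_mem_Ici (Set.mem_Ici.mpr ht.le) ht
    rwa [hF0] at h
  have hG_le_one : ∀ x : ℝ, G x ≤ 1 := fun x => hG_mono.ge_of_tendsto hG_top x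
  have hGlt : ∀ x : ℝ, 0 ≤ x → G x < 1 := fun x hx =>
    lt_of_lt_of_le
      (hG_strict (Set.mem_Ici.mpr hx) (Set.mem_Ici.mpr (by linarith)) (lt_add_one x))
      (hG_le_one (x + 1))
  have hGt : G t < 1 := hGlt t ht.le
  have hGt' : (0:ℝ) < 1 - G t := by linarith
  set c₁ := Fd / F t with hc₁def
  set c₂ := Gd / (1 - G t) with hc₂def
  have c₁pos : 0 < c₁ := div_pos hFd_pos hFt
  have c₂pos : 0 < c₂ := div_pos hGd_pos hGt'
  have ha0 : Tendsto a atTop (nhds 0) := by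
    refine tendsto_of_tendsto_of_tendsto_of_le_of_le' tendsto_const_nhds ha_log
      (Eventually.of_forall fun n => (ha_pos n).le) ?_
    filter_upwards [eventually_ge_atTop 3] with n hn
    refine le_mul_of_one_le_right (ha_pos n).le ?_
    have h3 : (3:ℝ) ≤ (n:ℝ) := by exact_mod_cast hn
    rw [Real.le_log_iff_exp_le (by linarith)]
    have he := Real.exp_one_lt_d9
    linarith
  have hdiv : ∀ y : ℝ, Tendsto (fun n : ℕ => y / (a n * ↑n)) atTop (nhds 0) :=
    fun y => Filter.Tendsto.const_div_atTop ha_top y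
  have evb : ∀ᶠ n : ℕ in atTop, 0 < a n * (n:ℝ) := by
    filter_upwards [eventually_ge_atTop 1] with n hn
    have : (1:ℝ) ≤ (n:ℝ) := by exact_mod_cast hn
    exact mul_pos (ha_pos n) (by linarith)
  have evF : ∀ y : ℝ, ∀ᶠ n : ℕ in atTop, 0 < F (t + y / (a n * ↑n)) := by
    intro y
    filter_upwards [(hdiv y).eventually (eventually_gt_nhds (by linarith : -(t/2) < (0:ℝ)))]
      with n hn
    have h1 : t/2 ≤ t + y / (a n * ↑n) := by linarith
    calc (0:ℝ) = F 0 := hF0.symm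
      _ < F (t/2) := hF_strict Set.self_mem_Ici (Set.mem_Ici.mpr (by linarith)) (by linarith)
      _ ≤ F (t + y / (a n * ↑n)) := hF_mono h1
  have evG : ∀ y : ℝ, ∀ᶠ n : ℕ in atTop, 0 < 1 - G (t + y / (a n * ↑n)) := by
    intro y
    filter_upwards [(hdiv y).eventually (eventually_gt_nhds (by linarith : -(t/2) < (0:ℝ)))]
      with n hn
    have h0 : (0:ℝ) ≤ t + y / (a n * ↑n) := by linarith
    linarith [hGlt _ h0]
  -- slope machinery
  have keyslope : ∀ (φ : ℝ → ℝ) (d : ℝ) (s : Set ℝ), HasDerivWithinAt φ d s t →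
      ∀ y : ℝ, y ≠ 0 → (∀ᶠ n : ℕ in atTop, t + y / (a n * ↑n) ∈ s) →
      Tendsto (fun n : ℕ => (a n * ↑n) * (φ (t + y / (a n * ↑n)) - φ t)) atTop
        (nhds (d * y)) := by
    intro φ d s hφ y hy hmem
    have hslope := hasDerivWithinAt_iff_tendsto_slope.mp hφ
    have hx : Tendsto (fun n : ℕ => t + y / (a n * ↑n)) atTop (nhdsWithin t (s \ {t})) := by
      rw [tendsto_nhdsWithin_iff]
      constructor
      · have h2 := (tendsto_const_nhds (x := t)).add (hdiv y)
        simpa using h2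
      · filter_upwards [hmem, evb] with n h1 h2
        refine ⟨h1, ?_⟩
        simp only [Set.mem_singleton_iff]
        have : y / (a n * ↑n) ≠ 0 := div_ne_zero hy h2.ne'
        intro hcontra
        apply this
        linarith [hcontra]
    have h3 := (hslope.comp hx).const_mul y
    refine Tendsto.congr' ?_ (by simpa [mul_comm] using h3)
    filter_upwards [evb] with n hb
    simp only [Function.comp_apply, slope_def_field]
    have h4 : t + y / (a n * ↑n) - t = y / (a n * ↑n) := by ring
    rw [h4]
    field_simp
  have hφ : HasDerivWithinAt (fun x => Real.log (F x)) (Fd / F t) (Set.Iio t) t :=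
    hFd.log hFt.ne'
  have hψ : HasDerivWithinAt (fun x => Real.log (1 - G x)) (-Gd / (1 - G t)) (Set.Ioi t) t :=
    (hGd.const_sub 1).log hGt'.ne'
  have keyF : ∀ y : ℝ, y < 0 →
      Tendsto (fun n : ℕ => (a n * ↑n) * Real.log (F (t + y / (a n * ↑n)) / F t)) atTop
        (nhds (c₁ * y)) := by
    intro y hy
    have hmem : ∀ᶠ n : ℕ in atTop, t + y / (a n * ↑n) ∈ Set.Iio t := by
      filter_upwards [evb] with n hb
      have h2 : y / (a n * ↑n) < 0 := div_neg_of_neg_of_pos hy hb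
      exact Set.mem_Iio.mpr (by linarith)
    have h1 := keyslope _ _ _ hφ y hy.ne hmem
    rw [hc₁def]
    refine Tendsto.congr' ?_ h1
    filter_upwards [evF y] with n hn
    rw [Real.log_div hn.ne' hFt.ne']
  have keyG : ∀ y : ℝ, 0 < y →
      Tendsto (fun n : ℕ => (a n * ↑n) * Real.log ((1 - G (t + y / (a n * ↑n))) / (1 - G t)))
        atTop (nhds (-(c₂ * y))) := by
    intro y hy
    have hmem : ∀ᶠ n : ℕ in atTop, t + y / (a n * ↑n) ∈ Set.Ioi t := by
      filter_upwards [evb] with n hb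
      have h2 : 0 < y / (a n * ↑n) := div_pos hy hb
      exact Set.mem_Ioi.mpr (by linarith)
    have h1 := keyslope _ _ _ hψ y hy.ne' hmem
    have heq : -Gd / (1 - G t) * y = -(c₂ * y) := by rw [hc₂def]; ring
    rw [heq] at h1
    refine Tendsto.congr' ?_ h1
    filter_upwards [evG y] with n hn
    rw [Real.log_div hn.ne' hGt'.ne']
  have limF : ∀ y : ℝ, y ≤ 0 →
      Tendsto (fun n : ℕ => a n * Real.log (β * (F (t + y / (a n * ↑n)) / F t) ^ n)) atTop
        (nhds (c₁ * y)) := by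
    intro y hy
    rcases hy.lt_or_eq with hy' | rfl
    · have hmain := keyF y hy'
      have h2 := (ha0.mul_const (Real.log β)).add hmain
      rw [zero_mul, zero_add] at h2
      refine Tendsto.congr' ?_ h2
      filter_upwards [evF y] with n hn
      have hr : 0 < F (t + y / (a n * ↑n)) / F t := div_pos hn hFt
      rw [Real.log_mul hβ.ne' (pow_pos hr n).ne', Real.log_pow]
      push_cast
      ring
    · have h2 : (fun n : ℕ => a n * Real.log (β * (F (t + 0 / (a n * ↑n)) / F t) ^ n)) =
          fun n : ℕ => a n * Real.log β := by
        funext n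
        rw [zero_div, add_zero, div_self hFt.ne', one_pow, mul_one]
      rw [h2]
      have h3 := ha0.mul_const (Real.log β)
      simpa using h3
  have limG : ∀ y : ℝ, 0 < y →
      Tendsto (fun n : ℕ =>
          a n * Real.log ((1 - β) * ((1 - G (t + y / (a n * ↑n))) / (1 - G t)) ^ n)) atTop
        (nhds (-(c₂ * y))) := by
    intro y hy
    have hmain := keyG y hy
    have h2 := (ha0.mul_const (Real.log (1 - β))).add hmain
    rw [zero_mul, zero_add] at h2
    refine Tendsto.congr' ?_ h2
    filter_upwards [evG y] with n hn
    have hr : 0 < (1 - G (t + y / (a n * ↑n))) / (1 - G t) := div_pos hn hGt'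
    rw [Real.log_mul (by linarith : (1:ℝ) - β ≠ 0) (pow_pos hr n).ne', Real.log_pow]
    push_cast
    ring
  have ppos : ∀ y : ℝ, ∀ᶠ n : ℕ in atTop, 0 < β * (F (t + y / (a n * ↑n)) / F t) ^ n := by
    intro y
    filter_upwards [evF y] with n hn
    exact mul_pos hβ (pow_pos (div_pos hn hFt) n)
  have qpos : ∀ y : ℝ, ∀ᶠ n : ℕ in atTop,
      0 < (1 - β) * ((1 - G (t + y / (a n * ↑n))) / (1 - G t)) ^ n := by
    intro y
    filter_upwards [evG y] with n hn
    exact mul_pos (by linarith) (pow_pos (div_pos hn hGt') n)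
  have tendsto_zero_of_log : ∀ w : ℕ → ℝ, (∀ᶠ n in atTop, 0 < w n) →
      Tendsto (fun n => Real.log (w n)) atTop atBot → Tendsto w atTop (nhds 0) := by
    intro w hw hl
    refine (Real.tendsto_exp_atBot.comp hl).congr' ?_
    filter_upwards [hw] with n hn
    exact Real.exp_log hn
  have plim0 : ∀ y : ℝ, y < 0 →
      Tendsto (fun n : ℕ => β * (F (t + y / (a n * ↑n)) / F t) ^ n) atTop (nhds 0) := by
    intro y hy
    exact tendsto_zero_of_log _ (ppos y)
      (tendsto_atBot_of_mul ha_pos ha0 (mul_neg_of_pos_of_neg c₁pos hy) (limF y hy.le))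
  have qlim0 : ∀ y : ℝ, 0 < y →
      Tendsto (fun n : ℕ => (1 - β) * ((1 - G (t + y / (a n * ↑n))) / (1 - G t)) ^ n) atTop
        (nhds 0) := by
    intro y hy
    refine tendsto_zero_of_log _ (qpos y)
      (tendsto_atBot_of_mul ha_pos ha0 ?_ (limG y hy))
    have := mul_pos c₂pos hy
    linarith
  -- probability identities
  have hW : ∀ n : ℕ, 1 ≤ n → ∀ (ω : Ω) (y : ℝ),
      a n * ↑n * (Z n ω - t) ≤ y ↔ Z n ω ≤ t + y / (a n * ↑n) := by
    intro n hn ω y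
    have hb : 0 < a n * (n:ℝ) := by
      have : (1:ℝ) ≤ (n:ℝ) := by exact_mod_cast hn
      exact mul_pos (ha_pos n) (by linarith)
    constructor
    · intro h
      have h2 : Z n ω - t ≤ y / (a n * ↑n) := (le_div_iff₀' hb).mpr h
      linarith
    · intro h
      have h2 : Z n ω - t ≤ y / (a n * ↑n) := by linarith
      exact (le_div_iff₀' hb).mp h2
  have msW : ∀ (n : ℕ) (y : ℝ), MeasurableSet {ω | a n * ↑n * (Z n ω - t) ≤ y} := by
    intro n y
    exact measurableSet_le (((hZ n).sub_const t).const_mul _) measurable_const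
  have idLe : ∀ y : ℝ, y ≤ 0 → ∀ᶠ n : ℕ in atTop,
      (ℙ {ω | a n * ↑n * (Z n ω - t) ≤ y}).toReal =
        β * (F (t + y / (a n * ↑n)) / F t) ^ n := by
    intro y hy
    filter_upwards [eventually_ge_atTop 1, evb,
      (hdiv y).eventually (eventually_gt_nhds (neg_lt_zero.mpr ht))] with n hn1 hb hgt
    have hset : {ω | a n * ↑n * (Z n ω - t) ≤ y} = {ω | Z n ω ≤ t + y / (a n * ↑n)} := by
      ext ω
      exact hW n hn1 ω y
    rw [hset, hZ_le n hn1 _ (by linarith) ?_]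
    have h2 : y / (a n * ↑n) ≤ 0 := div_nonpos_of_nonpos_of_nonneg hy hb.le
    linarith
  have idLePos : ∀ y : ℝ, 0 < y → ∀ᶠ n : ℕ in atTop,
      (ℙ {ω | a n * ↑n * (Z n ω - t) ≤ y}).toReal =
        1 - (1 - β) * ((1 - G (t + y / (a n * ↑n))) / (1 - G t)) ^ n := by
    intro y hy
    filter_upwards [eventually_ge_atTop 1, evb] with n hn1 hb
    have hset : {ω | a n * ↑n * (Z n ω - t) ≤ y} = {ω | Z n ω ≤ t + y / (a n * ↑n)} := by
      ext ω
      exact hW n hn1 ω y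
    have h2 : 0 < y / (a n * ↑n) := div_pos hy hb
    rw [hset, hZ_gt n hn1 _ (by linarith)]
  have idGtCompl : ∀ y : ℝ, 0 < y → ∀ᶠ n : ℕ in atTop,
      (ℙ {ω | y < a n * ↑n * (Z n ω - t)}).toReal =
        (1 - β) * ((1 - G (t + y / (a n * ↑n))) / (1 - G t)) ^ n := by
    intro y hy
    filter_upwards [idLePos y hy] with n hn
    have hset : {ω | y < a n * ↑n * (Z n ω - t)} = {ω | a n * ↑n * (Z n ω - t) ≤ y}ᶜ := by
      ext ω
      simp [not_le]
    rw [hset, measure_compl (msW n y) (measure_ne_top _ _), measure_univ,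
      ENNReal.toReal_sub_of_le prob_le_one ENNReal.one_ne_top, ENNReal.toReal_one, hn]
    ring
  have idIoc : ∀ u v : ℝ, u ≤ v → ∀ n : ℕ,
      (ℙ {ω | u < a n * ↑n * (Z n ω - t) ∧ a n * ↑n * (Z n ω - t) ≤ v}).toReal =
        (ℙ {ω | a n * ↑n * (Z n ω - t) ≤ v}).toReal -
          (ℙ {ω | a n * ↑n * (Z n ω - t) ≤ u}).toReal := by
    intro u v huv n
    have hsub : {ω | a n * ↑n * (Z n ω - t) ≤ u} ⊆ {ω | a n * ↑n * (Z n ω - t) ≤ v} :=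
      fun ω h => le_trans h huv
    have hset : {ω | u < a n * ↑n * (Z n ω - t) ∧ a n * ↑n * (Z n ω - t) ≤ v} =
        {ω | a n * ↑n * (Z n ω - t) ≤ v} \ {ω | a n * ↑n * (Z n ω - t) ≤ u} := by
      ext ω
      simp only [Set.mem_setOf_eq, Set.mem_diff, not_le]
      tauto
    rw [hset, measure_diff hsub (msW n u).nullMeasurableSet (measure_ne_top _ _),
      ENNReal.toReal_sub_of_le (measure_mono hsub) (measure_ne_top _ _)]
  -- upper-bound claim for sets covered by two half-lines
  have claimU : ∀ (Cs : Set ℝ) (s₀ r₀ : ℝ), s₀ ≤ 0 → 0 < r₀ →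
      (∀ x ∈ Cs, x ≤ s₀ ∨ r₀ < x) →
      limsup (fun n : ℕ => ((a n : ℝ) : EReal) *
          ENNReal.log (ℙ {ω | a n * ↑n * (Z n ω - t) ∈ Cs})) atTop
        ≤ ((max (c₁ * s₀) (-(c₂ * r₀)) : ℝ) : EReal) := by
    intro Cs s₀ r₀ hs₀ hr₀ hcov
    have hul : Tendsto (fun n : ℕ => a n * Real.log
        (β * (F (t + s₀ / (a n * ↑n)) / F t) ^ n +
          (1 - β) * ((1 - G (t + r₀ / (a n * ↑n))) / (1 - G t)) ^ n)) atTop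
        (nhds (max (c₁ * s₀) (-(c₂ * r₀)))) :=
      tendsto_mul_log_add ha_pos ha0 (limF s₀ hs₀) (limG r₀ hr₀) (ppos s₀) (qpos r₀)
    have hev : ∀ᶠ n : ℕ in atTop,
        ((a n : ℝ) : EReal) * ENNReal.log (ℙ {ω | a n * ↑n * (Z n ω - t) ∈ Cs}) ≤
        ((a n * Real.log (β * (F (t + s₀ / (a n * ↑n)) / F t) ^ n +
          (1 - β) * ((1 - G (t + r₀ / (a n * ↑n))) / (1 - G t)) ^ n) : ℝ) : EReal) := by
      filter_upwards [idLe s₀ hs₀, idGtCompl r₀ hr₀, ppos s₀, qpos r₀] with n h1 h2 hp hq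
      have hsub : {ω | a n * ↑n * (Z n ω - t) ∈ Cs} ⊆
          {ω | a n * ↑n * (Z n ω - t) ≤ s₀} ∪ {ω | r₀ < a n * ↑n * (Z n ω - t)} := by
        intro ω hω
        rcases hcov _ hω with h | h
        · exact Or.inl h
        · exact Or.inr h
      have hle : (ℙ {ω | a n * ↑n * (Z n ω - t) ∈ Cs}).toReal ≤
          β * (F (t + s₀ / (a n * ↑n)) / F t) ^ n +
            (1 - β) * ((1 - G (t + r₀ / (a n * ↑n))) / (1 - G t)) ^ n := by
        have step1 : ℙ {ω | a n * ↑n * (Z n ω - t) ∈ Cs} ≤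
            ℙ {ω | a n * ↑n * (Z n ω - t) ≤ s₀} + ℙ {ω | r₀ < a n * ↑n * (Z n ω - t)} :=
          (measure_mono hsub).trans (measure_union_le _ _)
        have step2 := ENNReal.toReal_mono
          (ENNReal.add_ne_top.mpr ⟨measure_ne_top _ _, measure_ne_top _ _⟩) step1
        rwa [ENNReal.toReal_add (measure_ne_top _ _) (measure_ne_top _ _), h1, h2] at step2
      rcases eq_or_ne (ℙ {ω | a n * ↑n * (Z n ω - t) ∈ Cs}) 0 with h0 | h0
      · rw [h0, ENNReal.log_zero, EReal.coe_mul_bot_of_pos (ha_pos n)]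
        exact bot_le
      · rw [ENNReal.log_pos_real h0 (measure_ne_top _ _), ← EReal.coe_mul,
          EReal.coe_le_coe_iff]
        refine mul_le_mul_of_nonneg_left ?_ (ha_pos n).le
        exact Real.log_le_log (ENNReal.toReal_pos h0 (measure_ne_top _ _)) hle
    calc limsup (fun n : ℕ => ((a n : ℝ) : EReal) *
          ENNReal.log (ℙ {ω | a n * ↑n * (Z n ω - t) ∈ Cs})) atTop
        ≤ limsup (fun n : ℕ =>
            ((a n * Real.log (β * (F (t + s₀ / (a n * ↑n)) / F t) ^ n +
              (1 - β) * ((1 - G (t + r₀ / (a n * ↑n))) / (1 - G t)) ^ n) : ℝ) : EReal)) atTop :=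
          limsup_le_limsup hev
      _ = _ := (EReal.tendsto_coe.mpr hul).limsup_eq
  constructor
  · -- upper bound for closed sets
    intro C hC
    refine ereal_le_of_forall fun z hz => ?_
    have hz' : ((-z : ℝ) : EReal) < ⨅ x ∈ C, if x ≤ 0 then ((-c₁ * x : ℝ) : EReal)
        else ((c₂ * x : ℝ) : EReal) := by
      rw [EReal.coe_neg]
      exact EReal.neg_lt_comm.mp hz
    have hIx : ∀ x ∈ C, -z < (if x ≤ 0 then -c₁ * x else c₂ * x) := by
      intro x hx
      have h1 := hz'.trans_le (iInf₂_le x hx)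
      rcases le_or_gt x 0 with h | h
      · rw [if_pos h] at h1 ⊢
        exact_mod_cast h1
      · rw [if_neg (not_le.mpr h)] at h1 ⊢
        exact_mod_cast h1
    rcases le_or_gt 0 z with hz0 | hz0
    · -- limsup ≤ 0 ≤ z
      have hle0 : limsup (fun n : ℕ => ((a n : ℝ) : EReal) *
          ENNReal.log (ℙ {ω | a n * ↑n * (Z n ω - t) ∈ C})) atTop ≤ (0 : EReal) := by
        refine limsup_le_of_le (by isBoundedDefault) ?_
        refine Eventually.of_forall fun n => ?_
        calc ((a n : ℝ) : EReal) * ENNReal.log (ℙ {ω | a n * ↑n * (Z n ω - t) ∈ C})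
            ≤ ((a n : ℝ) : EReal) * 0 :=
              mul_le_mul_of_nonneg_left (ENNReal.log_le_zero_iff.mpr prob_le_one)
                (by exact_mod_cast (ha_pos n).le)
          _ = 0 := mul_zero _
      refine hle0.trans ?_
      exact_mod_cast EReal.coe_le_coe_iff.mpr hz0
    · -- z < 0
      obtain ⟨s₀, hs₀0, hs₀z, hs₀cov⟩ :
          ∃ s₀ : ℝ, s₀ ≤ 0 ∧ c₁ * s₀ ≤ z ∧ ∀ x ∈ C, x ≤ 0 → x ≤ s₀ := by
        by_cases hCm : (C ∩ Set.Iic 0).Nonempty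
        · have hmem : sSup (C ∩ Set.Iic 0) ∈ C ∩ Set.Iic 0 :=
            (hC.inter isClosed_Iic).csSup_mem hCm ⟨0, fun x hx => hx.2⟩
          refine ⟨sSup (C ∩ Set.Iic 0), hmem.2, ?_,
            fun x hx hx0 => le_csSup ⟨0, fun y hy => hy.2⟩ ⟨hx, hx0⟩⟩
          have h1 := hIx _ hmem.1
          rw [if_pos (show sSup (C ∩ Set.Iic 0) ≤ 0 from hmem.2)] at h1
          linarith
        · refine ⟨min 0 (z / c₁), min_le_left _ _, ?_,
            fun x hx hx0 => (hCm ⟨x, hx, hx0⟩).elim⟩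
          have h1 : c₁ * min 0 (z / c₁) ≤ c₁ * (z / c₁) :=
            mul_le_mul_of_nonneg_left (min_le_right _ _) c₁pos.le
          have h2 : c₁ * (z / c₁) = z := by rw [mul_comm]; exact div_mul_cancel₀ _ c₁pos.ne'
          linarith
      obtain ⟨r₀, hr₀0, hr₀z, hr₀cov⟩ :
          ∃ r₀ : ℝ, 0 < r₀ ∧ -(c₂ * r₀) ≤ z ∧ ∀ x ∈ C, 0 < x → r₀ < x := by
        by_cases hCp : (C ∩ Set.Ioi 0).Nonempty
        · have hrC : sInf (C ∩ Set.Ioi 0) ∈ C := by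
            have h1 : sInf (C ∩ Set.Ioi 0) ∈ closure (C ∩ Set.Ioi 0) :=
              csInf_mem_closure hCp ⟨0, fun x hx => hx.2.le⟩
            have h2 := closure_mono Set.inter_subset_left h1
            rwa [hC.closure_eq] at h2
          have hr0 : 0 ≤ sInf (C ∩ Set.Ioi 0) := le_csInf hCp fun x hx => hx.2.le
          have hrlb : ∀ x ∈ C, 0 < x → sInf (C ∩ Set.Ioi 0) ≤ x :=
            fun x hx h0 => csInf_le ⟨0, fun y hy => hy.2.le⟩ ⟨hx, h0⟩
          set r := sInf (C ∩ Set.Ioi 0) with hrdef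
          have hrpos : 0 < r := by
            rcases hr0.lt_or_eq with h | h
            · exact h
            · exfalso
              have h1 := hIx r hrC
              rw [if_pos (le_of_eq h.symm)] at h1
              rw [← h] at h1
              simp at h1
              linarith
          have hrz : -z < c₂ * r := by
            have h1 := hIx r hrC
            rw [if_neg (not_le.mpr hrpos)] at h1
            linarith
          have h2 : -z / c₂ < r := by
            rw [div_lt_iff₀ c₂pos]
            linarith
          have h4 : c₂ * (-z / c₂) = -z := by rw [mul_comm]; exact div_mul_cancel₀ _ c₂pos.ne'
          refine ⟨(r + -z / c₂) / 2, ?_, ?_, fun x hx h0 => lt_of_lt_of_le ?_ (hrlb x hx h0)⟩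
          · have h1 : 0 < -z / c₂ := div_pos (by linarith) c₂pos
            linarith
          · have h3 : -z / c₂ ≤ (r + -z / c₂) / 2 := by linarith
            nlinarith [mul_le_mul_of_nonneg_left h3 c₂pos.le]
          · linarith
        · refine ⟨-z / c₂ + 1, ?_, ?_, fun x hx h0 => (hCp ⟨x, hx, h0⟩).elim⟩
          · have h1 : 0 < -z / c₂ := div_pos (by linarith) c₂pos
            linarith
          · have h4 : c₂ * (-z / c₂) = -z := by rw [mul_comm]; exact div_mul_cancel₀ _ c₂pos.ne'
            nlinarith [c₂pos]
      have hcov : ∀ x ∈ C, x ≤ s₀ ∨ r₀ < x := by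
        intro x hx
        rcases le_or_gt x 0 with h | h
        · exact Or.inl (hs₀cov x hx h)
        · exact Or.inr (hr₀cov x hx h)
      refine (claimU C s₀ r₀ hs₀0 hr₀0 hcov).trans ?_
      exact_mod_cast EReal.coe_le_coe_iff.mpr (max_le hs₀z hr₀z)
  · -- lower bound for open sets
    intro O hO
    rw [EReal.neg_le]
    refine le_iInf₂ fun x hx => ?_
    refine EReal.neg_le.mpr ?_
    obtain ⟨δ, hδ, hball⟩ := Metric.isOpen_iff.mp hO x hx
    have hball' : Set.Ioo (x - δ) (x + δ) ⊆ O := by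
      rwa [← Real.ball_eq_Ioo]
    rcases le_or_gt x 0 with hx0 | hx0
    · rw [if_pos hx0, ← EReal.coe_neg]
      have hgoal : -(-c₁ * x) = c₁ * x := by ring
      rw [hgoal]
      rcases hx0.lt_or_eq with hxneg | hxzero
      · -- x < 0
        obtain ⟨hwpos, hwlim⟩ := tendsto_mul_log_sub (A := c₁ * x) (B := c₁ * (x - δ/2))
          (p := fun n : ℕ => β * (F (t + x / (a n * ↑n)) / F t) ^ n)
          (q := fun n : ℕ => β * (F (t + (x - δ/2) / (a n * ↑n)) / F t) ^ n)
          ha_pos ha0 (by have h9 := mul_lt_mul_of_pos_left (show x - δ/2 < x by linarith) c₁pos; linarith)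
          (limF x hx0) (limF (x - δ/2) (by linarith))
          (ppos x) (ppos (x - δ/2))
        refine ereal_liminf_ge ha_pos ?_ (fun n => measure_ne_top _ _) hwpos hwlim
        filter_upwards [idLe x hx0, idLe (x - δ/2) (by linarith)] with n h1 h2
        have hIncl : {ω | x - δ/2 < a n * ↑n * (Z n ω - t) ∧ a n * ↑n * (Z n ω - t) ≤ x} ⊆
            {ω | a n * ↑n * (Z n ω - t) ∈ O} := by
          intro ω hω
          exact hball' ⟨by linarith [hω.1], by linarith [hω.2]⟩
        calc β * (F (t + x / (a n * ↑n)) / F t) ^ n -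
              β * (F (t + (x - δ/2) / (a n * ↑n)) / F t) ^ n
            = (ℙ {ω | x - δ/2 < a n * ↑n * (Z n ω - t) ∧
                a n * ↑n * (Z n ω - t) ≤ x}).toReal := by
              rw [idIoc (x - δ/2) x (by linarith) n, h1, h2]
          _ ≤ _ := ENNReal.toReal_mono (measure_ne_top _ _) (measure_mono hIncl)
      · -- x = 0
        subst hxzero
        rw [mul_zero]
        have hwt : Tendsto (fun n : ℕ =>
            (1 - (1 - β) * ((1 - G (t + δ/2 / (a n * ↑n))) / (1 - G t)) ^ n) -
              β * (F (t + -(δ/2) / (a n * ↑n)) / F t) ^ n) atTop (nhds 1) := by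
          have h1 := (tendsto_const_nhds (x := (1:ℝ))).sub
            (qlim0 (δ/2) (by linarith))
          have h2 := h1.sub (plim0 (-(δ/2)) (by linarith))
          simpa using h2
        have hwpos : ∀ᶠ n : ℕ in atTop,
            0 < (1 - (1 - β) * ((1 - G (t + δ/2 / (a n * ↑n))) / (1 - G t)) ^ n) -
              β * (F (t + -(δ/2) / (a n * ↑n)) / F t) ^ n :=
          hwt.eventually (eventually_gt_nhds (by norm_num))
        have hwlim : Tendsto (fun n : ℕ => a n * Real.log
            ((1 - (1 - β) * ((1 - G (t + δ/2 / (a n * ↑n))) / (1 - G t)) ^ n) -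
              β * (F (t + -(δ/2) / (a n * ↑n)) / F t) ^ n)) atTop (nhds 0) := by
          have hlog := (Real.continuousAt_log one_ne_zero).tendsto.comp hwt
          rw [Real.log_one] at hlog
          have h2 := ha0.mul hlog
          simpa using h2
        refine ereal_liminf_ge ha_pos ?_ (fun n => measure_ne_top _ _) hwpos hwlim
        filter_upwards [idLePos (δ/2) (by linarith), idLe (-(δ/2)) (by linarith)] with n h1 h2
        have hIncl : {ω | -(δ/2) < a n * ↑n * (Z n ω - t) ∧ a n * ↑n * (Z n ω - t) ≤ δ/2} ⊆
            {ω | a n * ↑n * (Z n ω - t) ∈ O} := by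
          intro ω hω
          exact hball' ⟨by linarith [hω.1], by linarith [hω.2]⟩
        calc (1 - (1 - β) * ((1 - G (t + δ/2 / (a n * ↑n))) / (1 - G t)) ^ n) -
              β * (F (t + -(δ/2) / (a n * ↑n)) / F t) ^ n
            = (ℙ {ω | -(δ/2) < a n * ↑n * (Z n ω - t) ∧
                a n * ↑n * (Z n ω - t) ≤ δ/2}).toReal := by
              rw [idIoc (-(δ/2)) (δ/2) (by linarith) n, h1, h2]
          _ ≤ _ := ENNReal.toReal_mono (measure_ne_top _ _) (measure_mono hIncl)
    · -- x > 0
      rw [if_neg (not_le.mpr hx0), ← EReal.coe_neg]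
      set u := max (x/2) (x - δ/2) with hudef
      have hu0 : 0 < u := lt_max_of_lt_left (by linarith)
      have hux : u < x := max_lt (by linarith) (by linarith)
      have huxle : u ≤ x := hux.le
      have hud : x - δ/2 ≤ u := le_max_right _ _
      obtain ⟨hwpos, hwlim⟩ := tendsto_mul_log_sub (A := -(c₂ * u)) (B := -(c₂ * (x + δ/2)))
        (p := fun n : ℕ => (1 - β) * ((1 - G (t + u / (a n * ↑n))) / (1 - G t)) ^ n)
        (q := fun n : ℕ => (1 - β) * ((1 - G (t + (x + δ/2) / (a n * ↑n))) / (1 - G t)) ^ n)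
        ha_pos ha0 (by have h9 := mul_lt_mul_of_pos_left (show u < x + δ/2 by linarith) c₂pos; linarith)
        (limG u hu0) (limG (x + δ/2) (by linarith))
        (qpos u) (qpos (x + δ/2))
      have hstep : ((-(c₂ * u) : ℝ) : EReal) ≤ liminf (fun n : ℕ => ((a n : ℝ) : EReal) *
          ENNReal.log (ℙ {ω | a n * ↑n * (Z n ω - t) ∈ O})) atTop := by
        refine ereal_liminf_ge ha_pos ?_ (fun n => measure_ne_top _ _) hwpos hwlim
        filter_upwards [idLePos u hu0, idLePos (x + δ/2) (by linarith)] with n h1 h2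
        have hIncl : {ω | u < a n * ↑n * (Z n ω - t) ∧ a n * ↑n * (Z n ω - t) ≤ x + δ/2} ⊆
            {ω | a n * ↑n * (Z n ω - t) ∈ O} := by
          intro ω hω
          exact hball' ⟨by linarith [hω.1], by linarith [hω.2]⟩
        calc (1 - β) * ((1 - G (t + u / (a n * ↑n))) / (1 - G t)) ^ n -
              (1 - β) * ((1 - G (t + (x + δ/2) / (a n * ↑n))) / (1 - G t)) ^ n
            = (ℙ {ω | u < a n * ↑n * (Z n ω - t) ∧
                a n * ↑n * (Z n ω - t) ≤ x + δ/2}).toReal := by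
              rw [idIoc u (x + δ/2) (by linarith) n, h1, h2]
              ring
          _ ≤ _ := ENNReal.toReal_mono (measure_ne_top _ _) (measure_mono hIncl)
      refine le_trans ?_ hstep
      rw [EReal.coe_le_coe_iff]
      have := mul_le_mul_of_nonneg_left huxle c₂pos.le
      linarith
end
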